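/- arXiv:1207.6034 — 8 statements merged into one kernel-verified Lean document; each statement's English description precedes it below -/
import Mathlib

section
/- If E is a real locally convex Hausdorff space with the metric convex compactness property (the closed convex hull of every compact metrizable subset is compact), then every continuous map f : [0,1] → E is Pettis integrable with respect to Lebesgue measure. -/
/-!
The range `K` of `f` is compact, and metrizable as a Hausdorff continuous image of `[0, 1]`, so
its closed convex hull `Q` is compact. For finitely many functionals `e₁, …, eₙ`, the Bochner
integral of `(e₁ ∘ f, …, eₙ ∘ f)` lies in the image of `Q` in `ℝⁿ`, since that image is compact
and convex; so the closed sets `{v ∈ Q | e v = ∫ e ∘ f}` have the finite intersection property,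
and compactness of `Q` gives a point in all of them.
-/

open MeasureTheory Set

variable {E : Type*} [AddCommGroup E] [Module ℝ E] [TopologicalSpace E]
  [IsTopologicalAddGroup E] [ContinuousSMul ℝ E] [LocallyConvexSpace ℝ E] [T2Space E]

/-- `E` has the metric convex compactness property: the closed convex hull of every
compact metrizable subset is compact. -/
def MetricConvexCompactness (E : Type*) [AddCommGroup E] [Module ℝ E] [TopologicalSpace E] : Prop :=
  ∀ K : Set E, IsCompact K → TopologicalSpace.MetrizableSpace K →
    IsCompact (closure (convexHull ℝ K))

/-- Urysohn functions separate the points of `Y`, and since `X × X` is Lindelöf, countably many of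
them already do. -/
theorem TopologicalSpace.MetrizableSpace.of_continuous_surjective {X Y : Type*}
    [TopologicalSpace X] [SecondCountableTopology X] [TopologicalSpace Y] [CompactSpace Y]
    [T2Space Y] {q : X → Y} (hq : Continuous q) (hsurj : Function.Surjective q) :
    MetrizableSpace Y := by
  let U : C(Y, ℝ) → Set (X × X) := fun g => {p | g (q p.1) ≠ g (q p.2)}
  have hU : ∀ g, IsOpen (U g) := fun g =>
    isOpen_ne_fun (g.continuous.comp (hq.comp continuous_fst))
      (g.continuous.comp (hq.comp continuous_snd))
  obtain ⟨k, hk⟩ := eq_open_union_nat U hU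
  refine Metric.PiNatEmbed.TopologicalSpace.MetrizableSpace.of_countable_separating
    (fun n => k n) (fun n => (k n).continuous) ?_
  intro y y' hne
  obtain ⟨s, rfl⟩ := hsurj y
  obtain ⟨t, rfl⟩ := hsurj y'
  obtain ⟨g, hg₀, hg₁, -⟩ := exists_continuous_zero_one_of_isClosed isClosed_singleton
    isClosed_singleton (disjoint_singleton.2 hne)
  have hst : (s, t) ∈ ⋃ n, U (k n) := by
    rw [hk]
    exact mem_iUnion.2 ⟨g, by simp [U, hg₀ rfl, hg₁ rfl]⟩
  simpa [U] using hst

section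
variable {V Ω : Type*} [AddCommGroup V] [Module ℝ V] [TopologicalSpace V]
  [MeasurableSpace Ω] {μ : Measure Ω} [IsProbabilityMeasure μ]
  {Q : Set V} {g : Ω → V}

theorem IsCompact.exists_mem_forall_mem_finset_dual_eq_integral (hQc : IsCompact Q)
    (hQconv : Convex ℝ Q) (hgQ : ∀ᵐ ω ∂μ, g ω ∈ Q)
    (hg : ∀ e : V →L[ℝ] ℝ, Integrable (fun ω => e (g ω)) μ) (u : Finset (V →L[ℝ] ℝ)) :
    ∃ v ∈ Q, ∀ e ∈ u, e v = ∫ ω, e (g ω) ∂μ := by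
  let T : V →L[ℝ] (u → ℝ) := ContinuousLinearMap.pi fun e => e
  have hTg : ∀ e : u, Integrable (fun ω => T (g ω) e) μ := fun e => hg e
  obtain ⟨v, hvQ, hv⟩ : (∫ ω, T (g ω) ∂μ) ∈ T '' Q :=
    (hQconv.linear_image T.toLinearMap).integral_mem (hQc.image T.continuous).isClosed
      (hgQ.mono fun ω => mem_image_of_mem T) (Integrable.of_eval hTg)
  refine ⟨v, hvQ, fun e he => ?_⟩
  simpa [T] using (congrFun hv ⟨e, he⟩).trans (eval_integral hTg _)

theorem IsCompact.exists_mem_forall_dual_eq_integral (hQc : IsCompact Q) (hQconv : Convex ℝ Q)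
    (hgQ : ∀ᵐ ω ∂μ, g ω ∈ Q) (hg : ∀ e : V →L[ℝ] ℝ, Integrable (fun ω => e (g ω)) μ) :
    ∃ v ∈ Q, ∀ e : V →L[ℝ] ℝ, e v = ∫ ω, e (g ω) ∂μ := by
  obtain ⟨v, hvQ, hv⟩ := hQc.inter_iInter_nonempty
    (fun e : V →L[ℝ] ℝ => {v | e v = ∫ ω, e (g ω) ∂μ})
    (fun e => isClosed_eq e.continuous continuous_const) fun u => by
      obtain ⟨v, hvQ, hv⟩ := hQc.exists_mem_forall_mem_finset_dual_eq_integral hQconv hgQ hg u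
      exact ⟨v, hvQ, mem_iInter₂.2 hv⟩
  exact ⟨v, hvQ, mem_iInter.1 hv⟩
end

theorem stmt1 (h : MetricConvexCompactness E) (f : Icc (0:ℝ) 1 → E) (hf : Continuous f) :
    ∃ v : E, ∀ e' : E →L[ℝ] ℝ,
      Integrable (fun t : Icc (0:ℝ) 1 => e' (f t)) volume ∧
      e' v = ∫ t : Icc (0:ℝ) 1, e' (f t) := by
  have hK : IsCompact (range f) := isCompact_range hf
  have : CompactSpace (range f) := isCompact_iff_compactSpace.mp hK
  have hQ : IsCompact (closure (convexHull ℝ (range f))) :=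
    h _ hK (.of_continuous_surjective (hf.subtype_mk _) rangeFactorization_surjective)
  have hint (e' : E →L[ℝ] ℝ) : Integrable (fun t => e' (f t)) volume :=
    (e'.continuous.comp hf).integrable_of_hasCompactSupport (.of_compactSpace _)
  obtain ⟨v, -, hv⟩ := hQ.exists_mem_forall_dual_eq_integral (convex_convexHull ℝ _).closure
    (ae_of_all _ fun t => subset_closure (subset_convexHull ℝ _ (mem_range_self t))) hint
  exact ⟨v, fun e' => ⟨hint e', hv e'⟩⟩
end

section
/- Suppose every continuous curve f : [0,1] → E is Lebesgue–Pettis integrable. If g : [0,1] → E is continuous and σ is a non-atomic Borel probability measure on [0,1] with full support, then the pushforward measure μ = σ ∘ g⁻¹ has a barycenter in E, namely the Pettis integral ∫₀¹ g(F⁻¹(t)) dt where F is the distribution function of σ. -/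
open MeasureTheory Set

variable {E : Type*} [AddCommGroup E] [Module ℝ E] [TopologicalSpace E]
  [IsTopologicalAddGroup E] [ContinuousSMul ℝ E] [LocallyConvexSpace ℝ E] [T2Space E]
  [MeasurableSpace E] [BorelSpace E]

def IsBarycenter (μ : Measure E) (r : E) : Prop :=
  ∀ e' : E →L[ℝ] ℝ, Integrable (fun y => e' y) μ ∧ e' r = ∫ y, e' y ∂μ

def IsPettisIntegral {X : Type*} [MeasurableSpace X] (ν : Measure X) (f : X → E) (v : E) : Prop :=
  ∀ e' : E →L[ℝ] ℝ, Integrable (fun x => e' (f x)) ν ∧ e' v = ∫ x, e' (f x) ∂ν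

/-!
Because σ has no atoms and charges every open set, `t ↦ σ [0, t]` is a continuous strictly
increasing surjection of `[0, 1]`, hence an order isomorphism `Φ`, and `Φ⁻¹` pushes Lebesgue
measure forward to `σ` (compare the two measures on the intervals `[0, a]`). Every right
inverse of `F` is therefore `Φ⁻¹`, and by the change of variables formula the Pettis integral of
the continuous curve `g ∘ Φ⁻¹` pairs with each functional `e'` exactly as `∫ e' d(σ ∘ g⁻¹)`.
-/

lemma MeasureTheory.NullSingletonClass.map_of_injective {α β : Type*} [MeasurableSpace α]
    [MeasurableSpace β] [MeasurableSingletonClass β] {μ : Measure α} [NullSingletonClass μ]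
    {f : α → β} (hf : Measurable f) (hinj : Function.Injective f) :
    NullSingletonClass (μ.map f) :=
  ⟨fun y => by
    rw [Measure.map_apply hf (measurableSet_singleton y)]
    exact (subsingleton_singleton.preimage hinj).measure_zero μ⟩

lemma ProbabilityTheory.continuous_cdf (μ : Measure ℝ) [IsProbabilityMeasure μ]
    [NullSingletonClass μ] : Continuous (cdf μ) := by
  refine continuous_iff_continuousAt.2 fun x => ?_
  rw [(cdf μ).mono.continuousAt_iff_leftLim_eq_rightLim, StieltjesFunction.rightLim_eq]
  have h : (cdf μ).measure {x} = 0 := by rw [measure_cdf]; exact measure_singleton x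
  rw [StieltjesFunction.measure_singleton, ENNReal.ofReal_eq_zero] at h
  exact le_antisymm ((cdf μ).mono.leftLim_le le_rfl) (by linarith)

namespace unitInterval

variable (μ : Measure I) [IsProbabilityMeasure μ]

noncomputable def cdf (t : I) : I := ⟨μ.real (Iic t), measureReal_nonneg, measureReal_le_one⟩

lemma coe_cdf (t : I) : (cdf μ t : ℝ) = μ.real (Iic t) := rfl

lemma coe_cdf_eq_measureReal_Ioc [NullSingletonClass μ] (t : I) :
    (cdf μ t : ℝ) = (μ {s : I | (s : ℝ) ∈ Ioc 0 (t : ℝ)}).toReal := by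
  have : Ioc 0 t =ᵐ[μ] Iic t := by
    rw [← Icc_bot]
    exact Ioc_ae_eq_Icc
  rw [show {s : I | (s : ℝ) ∈ Ioc 0 (t : ℝ)} = Ioc 0 t from rfl, measure_congr this]
  rfl

lemma coe_cdf_eq_cdf_map (t : I) :
    (cdf μ t : ℝ) = ProbabilityTheory.cdf (μ.map (↑)) t := by
  have := Measure.isProbabilityMeasure_map (μ := μ) measurable_subtype_coe.aemeasurable
  rw [ProbabilityTheory.cdf_eq_real, map_measureReal_apply measurable_subtype_coe measurableSet_Iic]
  rfl

lemma continuous_cdf [NullSingletonClass μ] : Continuous (cdf μ) := by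
  have := Measure.isProbabilityMeasure_map (μ := μ) measurable_subtype_coe.aemeasurable
  have := NullSingletonClass.map_of_injective (μ := μ) measurable_subtype_coe Subtype.val_injective
  refine continuous_induced_rng.2 ?_
  rw [show Subtype.val ∘ cdf μ = _ ∘ Subtype.val from funext (coe_cdf_eq_cdf_map μ)]
  exact (ProbabilityTheory.continuous_cdf _).comp continuous_subtype_val

lemma cdf_zero [NullSingletonClass μ] : cdf μ 0 = 0 := by
  have : Iic (0 : I) = {0} := ext fun s =>
    ⟨fun hs => le_antisymm hs nonneg', fun hs => le_of_eq hs⟩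
  ext
  rw [coe_cdf, this, measureReal_def, measure_singleton]
  rfl

lemma cdf_one : cdf μ 1 = 1 := by
  have : Iic (1 : I) = univ := eq_univ_of_forall fun _ => le_one'
  ext
  rw [coe_cdf, this, probReal_univ]
  rfl

lemma strictMono_cdf [μ.IsOpenPosMeasure] : StrictMono (cdf μ) := by
  intro a b hab
  have hpos : 0 < μ (Ioc a b) :=
    (isOpen_Ioo.measure_pos μ (nonempty_Ioo.2 hab)).trans_le (measure_mono Ioo_subset_Ioc_self)
  have hlt : μ (Iic a) < μ (Iic b) := calc
    μ (Iic a) < μ (Iic a) + μ (Ioc a b) := ENNReal.lt_add_right (measure_ne_top μ _) hpos.ne'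
    _ = μ (Iic b) := by
      rw [← measure_union (Iic_disjoint_Ioc le_rfl) measurableSet_Ioc, Iic_union_Ioc_eq_Iic hab.le]
  exact (ENNReal.toReal_lt_toReal (measure_ne_top μ _) (measure_ne_top μ _)).2 hlt

lemma surjective_cdf [NullSingletonClass μ] : Function.Surjective (cdf μ) := by
  intro y
  obtain ⟨t, -, ht⟩ := intermediate_value_Icc (zero_le_one' I) (continuous_cdf μ).continuousOn
    (by rw [cdf_zero, cdf_one]; exact y.2 : y ∈ Icc (cdf μ 0) (cdf μ 1))
  exact ⟨t, ht⟩

noncomputable def cdfOrderIso [NullSingletonClass μ] [μ.IsOpenPosMeasure] : I ≃o I :=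
  StrictMono.orderIsoOfSurjective (cdf μ) (strictMono_cdf μ) (surjective_cdf μ)

@[simp]
lemma coe_cdfOrderIso [NullSingletonClass μ] [μ.IsOpenPosMeasure] : ⇑(cdfOrderIso μ) = cdf μ := rfl

lemma map_cdfOrderIso_symm_volume [NullSingletonClass μ] [μ.IsOpenPosMeasure] :
    volume.map (cdfOrderIso μ).symm = μ := by
  refine Measure.ext_of_Iic _ _ fun a => ?_
  rw [Measure.map_apply (cdfOrderIso μ).symm.monotone.measurable measurableSet_Iic,
    OrderIso.preimage_Iic, OrderIso.symm_symm, volume_Iic, coe_cdfOrderIso, coe_cdf,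
    ofReal_measureReal]

lemma eq_cdfOrderIso_symm [NullSingletonClass μ] [μ.IsOpenPosMeasure] {G : I → I}
    (hG : ∀ t, (cdf μ (G t) : ℝ) = t) : G = (cdfOrderIso μ).symm :=
  funext fun t => (cdfOrderIso μ).injective <| Subtype.ext <| by
    rw [OrderIso.apply_symm_apply, coe_cdfOrderIso, hG]

end unitInterval

lemma isBarycenter_map_iff {V X : Type*} [AddCommGroup V] [Module ℝ V] [TopologicalSpace V]
    [MeasurableSpace V] [OpensMeasurableSpace V] [MeasurableSpace X] {ν : Measure X} {f : X → V}
    (hf : AEMeasurable f ν) {r : V} : IsBarycenter (ν.map f) r ↔ IsPettisIntegral ν f r := by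
  refine forall_congr' fun e' => ?_
  rw [integrable_map_measure e'.continuous.aestronglyMeasurable hf,
    integral_map hf e'.continuous.aestronglyMeasurable]
  rfl

theorem stmt5
    (hPettis : ∀ f : Icc (0:ℝ) 1 → E, Continuous f → ∃ v, IsPettisIntegral volume f v)
    (g : Icc (0:ℝ) 1 → E) (hg : Continuous g)
    (σ : Measure (Icc (0:ℝ) 1)) [IsProbabilityMeasure σ]
    (hna : ∀ x, σ {x} = 0)
    (hfull : ∀ U : Set (Icc (0:ℝ) 1), IsOpen U → U.Nonempty → 0 < σ U) :
    let F : Icc (0:ℝ) 1 → ℝ := fun t => (σ {s | (s:ℝ) ∈ Ioc (0:ℝ) (t:ℝ)}).toReal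
    ∃ r : E, IsBarycenter (σ.map g) r ∧
      ∀ G : Icc (0:ℝ) 1 → Icc (0:ℝ) 1,
        (∀ t : Icc (0:ℝ) 1, F (G t) = (t:ℝ)) → IsPettisIntegral volume (g ∘ G) r := by
  intro F
  have : NullSingletonClass σ := ⟨hna⟩
  have : σ.IsOpenPosMeasure := ⟨fun U hU hne => (hfull U hU hne).ne'⟩
  set Φ := unitInterval.cdfOrderIso σ
  obtain ⟨r, hr⟩ := hPettis (g ∘ Φ.symm) (hg.comp Φ.toHomeomorph.symm.continuous)
  refine ⟨r, ?_, fun G hFG => ?_⟩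
  · have hΦ : Measurable Φ.symm := Φ.symm.monotone.measurable
    rwa [← unitInterval.map_cdfOrderIso_symm_volume σ, Measure.map_map hg.measurable hΦ,
      isBarycenter_map_iff (hg.measurable.comp hΦ).aemeasurable]
  · rwa [unitInterval.eq_cdfOrderIso_symm σ (G := G) fun t => by
      rw [unitInterval.coe_cdf_eq_measureReal_Ioc]; exact hFG t]
end

section
/- Let K be a compact metrizable subset of a real locally convex Hausdorff space E (or more generally of any topological vector space). Then there exists a continuous map g : [0,1] → E with g([0,1]) contained in the closed convex hull of K and K ⊆ g([0,1]). -/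
/-!
By the Hausdorff–Alexandroff theorem, `K` is the image of a continuous map `f` on the Cantor set.
Extend `f` across each gap of the Cantor set by affine interpolation between its values at the two
ends of the gap; the values stay in the convex hull of `K`. For continuity at a point `c` of the
Cantor set take a balanced neighbourhood `U` of `0`: the end of the gap on the side of `c` is close
to `c`, while the other end is either close too or so far away that its interpolation weight is
small, and small multiples of the compact, hence bounded, set `{f u - f c}` lie in `U`.
-/

open Set Filter Topology TopologicalSpace AffineMap Pointwise

section GapInterpolation

variable {E : Type*} [AddCommGroup E] [Module ℝ E]
  {C : Set ℝ} {f : ℝ → E} {a b c l r s t : ℝ}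

noncomputable def gapLeft (C : Set ℝ) (t : ℝ) : ℝ := sSup (C ∩ Iic t)

noncomputable def gapRight (C : Set ℝ) (t : ℝ) : ℝ := sInf (C ∩ Ici t)

/-- On a gap `(l, r)` of `C` this interpolates linearly between `f l` and `f r`; at a point of
`C` both endpoints collapse to that point (and the parameter is the junk value `0 / 0 = 0`). -/
noncomputable def gapInterp (C : Set ℝ) (f : ℝ → E) (t : ℝ) : E :=
  lineMap (f (gapLeft C t)) (f (gapRight C t))
    ((t - gapLeft C t) / (gapRight C t - gapLeft C t))

theorem isGreatest_gapLeft (hC : IsCompact C) (ht : (C ∩ Iic t).Nonempty) :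
    IsGreatest (C ∩ Iic t) (gapLeft C t) :=
  (hC.inter_right isClosed_Iic).isGreatest_sSup ht

theorem isLeast_gapRight (hC : IsCompact C) (ht : (C ∩ Ici t).Nonempty) :
    IsLeast (C ∩ Ici t) (gapRight C t) :=
  (hC.inter_right isClosed_Ici).isLeast_sInf ht

theorem gapInterp_eq_self (hC : IsCompact C) (ht : t ∈ C) : gapInterp C f t = f t := by
  have hl : gapLeft C t = t :=
    (isGreatest_gapLeft hC ⟨t, ht, self_mem_Iic⟩).unique ⟨⟨ht, self_mem_Iic⟩, fun _ hu => hu.2⟩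
  have hr : gapRight C t = t :=
    (isLeast_gapRight hC ⟨t, ht, self_mem_Ici⟩).unique ⟨⟨ht, self_mem_Ici⟩, fun _ hu => hu.2⟩
  simp [gapInterp, hl, hr]

theorem div_mem_Icc_of_mem_Icc (ht : t ∈ Icc l r) : (t - l) / (r - l) ∈ Icc (0 : ℝ) 1 :=
  ⟨div_nonneg (sub_nonneg.2 ht.1) (sub_nonneg.2 (ht.1.trans ht.2)),
    div_le_one_of_le₀ (by linarith [ht.2]) (sub_nonneg.2 (ht.1.trans ht.2))⟩

theorem gapInterp_mem_convexHull (hC : IsCompact C) (hl : (C ∩ Iic t).Nonempty)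
    (hr : (C ∩ Ici t).Nonempty) : gapInterp C f t ∈ convexHull ℝ (f '' C) := by
  have hL := isGreatest_gapLeft hC hl
  have hR := isLeast_gapRight hC hr
  exact (convex_convexHull ℝ _).lineMap_mem
    (subset_convexHull ℝ _ (mem_image_of_mem f hL.1.1))
    (subset_convexHull ℝ _ (mem_image_of_mem f hR.1.1))
    (div_mem_Icc_of_mem_Icc ⟨hL.1.2, hR.1.2⟩)

theorem gapInterp_eq_lineMap (hC : IsCompact C) (hl : l ∈ C) (hr : r ∈ C)
    (hgap : ∀ u ∈ C, u ∉ Ioo l r) (hs : s ∈ Ioo l r) :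
    gapInterp C f s = lineMap (f l) (f r) ((s - l) / (r - l)) := by
  have hL : gapLeft C s = l :=
    (isGreatest_gapLeft hC ⟨l, hl, hs.1.le⟩).unique ⟨⟨hl, hs.1.le⟩,
      fun u ⟨hu, hus⟩ => not_lt.1 fun hlu => hgap u hu ⟨hlu, hus.trans_lt hs.2⟩⟩
  have hR : gapRight C s = r :=
    (isLeast_gapRight hC ⟨r, hr, hs.2.le⟩).unique ⟨⟨hr, hs.2.le⟩,
      fun u ⟨hu, hsu⟩ => not_lt.1 fun hur => hgap u hu ⟨hs.1.trans_le hsu, hur⟩⟩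
  rw [gapInterp, hL, hR]

theorem div_lt_of_abs_sub_lt_min {δ ε : ℝ} (hcl : c ≤ l) (hlt : l ≤ t) (hr : δ ≤ r - c)
    (ht : |t - c| < min (δ / 2) (δ * ε / 2)) : (t - l) / (r - l) < ε := by
  simp only [lt_min_iff, abs_lt] at ht
  have hδ : 0 < δ := by linarith
  have hε : 0 < ε := pos_of_mul_pos_right (a := δ) (by linarith) hδ.le
  rw [div_lt_iff₀ (by linarith)]
  nlinarith

theorem lineMap_sub_eq (x y z : E) (θ : ℝ) :
    lineMap x y θ - z = (1 - θ) • (x - z) + θ • (y - z) := by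
  rw [lineMap_apply_module]
  module

theorem gapInterp_sub_mem_add {U : Set E} {δ ε : ℝ} (hC : IsCompact C) (hU : Balanced ℝ U)
    (hc : c ∈ C) (hl : (C ∩ Iic t).Nonempty) (hr : (C ∩ Ici t).Nonempty)
    (hnear : ∀ u ∈ C, |u - c| < δ → f u - f c ∈ U)
    (hsmall : ∀ θ : ℝ, |θ| < ε → ∀ u ∈ C, θ • (f u - f c) ∈ U)
    (htc : |t - c| < min (δ / 2) (δ * ε / 2)) :
    gapInterp C f t - f c ∈ U + U := by
  have hL := isGreatest_gapLeft hC hl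
  have hR := isLeast_gapRight hC hr
  set l := gapLeft C t
  set r := gapRight C t
  have hlt : l ≤ t := hL.1.2
  have htr : t ≤ r := hR.1.2
  have hθ := div_mem_Icc_of_mem_Icc ⟨hlt, htr⟩
  have hθ₁ : ‖(1 : ℝ) - (t - l) / (r - l)‖ ≤ 1 := by
    rw [Real.norm_eq_abs, abs_le]; constructor <;> linarith [hθ.1, hθ.2]
  have hθ₂ : ‖(t - l) / (r - l)‖ ≤ 1 := by
    rw [Real.norm_eq_abs, abs_le]; constructor <;> linarith [hθ.1, hθ.2]
  obtain ⟨htc₁, htc₂⟩ := abs_lt.1 (htc.trans_le (min_le_left _ _))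
  rw [gapInterp, lineMap_sub_eq]
  rcases le_total c t with hct | htc'
  · have hcl : c ≤ l := hL.2 ⟨hc, hct⟩
    refine add_mem_add (hU.smul_mem hθ₁ (hnear l hL.1.1 ?_)) ?_
    · rw [abs_lt]; constructor <;> linarith
    by_cases hrc : r - c < δ
    · exact hU.smul_mem hθ₂ (hnear r hR.1.1 (by rw [abs_lt]; constructor <;> linarith))
    · refine hsmall _ ?_ r hR.1.1
      rw [abs_of_nonneg hθ.1]
      exact div_lt_of_abs_sub_lt_min hcl hlt (not_lt.1 hrc) htc
  · have hrc : r ≤ c := hR.2 ⟨hc, htc'⟩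
    refine add_mem_add ?_ (hU.smul_mem hθ₂ (hnear r hR.1.1 ?_))
    · by_cases hcl : c - l < δ
      · exact hU.smul_mem hθ₁ (hnear l hL.1.1 (by rw [abs_lt]; constructor <;> linarith))
      · refine hsmall _ ?_ l hL.1.1
        have hlr : r - l ≠ 0 := by linarith [not_lt.1 hcl]
        have hflip : 1 - (t - l) / (r - l) = (-t - -r) / (-l - -r) := by
          rw [neg_sub_neg, neg_sub_neg, eq_div_iff hlr, sub_mul, div_mul_cancel₀ _ hlr]
          ring
        rw [abs_of_nonneg (sub_nonneg.2 hθ.2), hflip]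
        refine div_lt_of_abs_sub_lt_min (δ := δ) (neg_le_neg hrc) (neg_le_neg htr)
          (by linarith [not_lt.1 hcl]) ?_
        rwa [neg_sub_neg, abs_sub_comm]
    · rw [abs_lt]; constructor <;> linarith

variable [TopologicalSpace E] [IsTopologicalAddGroup E] [ContinuousSMul ℝ E]

theorem continuousAt_gapInterp_of_notMem
    (hC : IsCompact C) (ht : t ∉ C) (hl : (C ∩ Iic t).Nonempty) (hr : (C ∩ Ici t).Nonempty) :
    ContinuousAt (gapInterp C f) t := by
  have hL := isGreatest_gapLeft hC hl
  have hR := isLeast_gapRight hC hr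
  have htgap : t ∈ Ioo (gapLeft C t) (gapRight C t) :=
    ⟨hL.1.2.lt_of_ne fun h => ht (h ▸ hL.1.1), hR.1.2.lt_of_ne' fun h => ht (h ▸ hR.1.1)⟩
  have hgap : ∀ u ∈ C, u ∉ Ioo (gapLeft C t) (gapRight C t) := fun u hu ⟨hlu, hur⟩ =>
    (le_total u t).elim (fun hut => hlu.not_ge (hL.2 ⟨hu, hut⟩))
      (fun htu => hur.not_ge (hR.2 ⟨hu, htu⟩))
  have hlin : Continuous fun s => lineMap (f (gapLeft C t)) (f (gapRight C t))
      ((s - gapLeft C t) / (gapRight C t - gapLeft C t)) := by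
    fun_prop
  exact hlin.continuousAt.congr (eventuallyEq_of_mem (Ioo_mem_nhds htgap.1 htgap.2)
    fun s hs => (gapInterp_eq_lineMap hC hL.1.1 hR.1.1 hgap hs).symm)

theorem continuousWithinAt_gapInterp (hC : IsCompact C) (hf : ContinuousOn f C) (ha : a ∈ C)
    (hb : b ∈ C) (hc : c ∈ C) : ContinuousWithinAt (gapInterp C f) (Icc a b) c := by
  rw [ContinuousWithinAt, gapInterp_eq_self hC hc, ← tendsto_sub_nhds_zero_iff]
  intro V hV
  obtain ⟨U₀, hU₀, hU₀V⟩ := exists_nhds_zero_half hV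
  obtain ⟨U, ⟨hU, hUb⟩, hUU₀⟩ := (nhds_basis_balanced ℝ E).mem_iff.1 hU₀
  obtain ⟨δ, hδ, hnear⟩ : ∃ δ > 0, ∀ u ∈ C, |u - c| < δ → f u - f c ∈ U := by
    obtain ⟨δ, hδ, hball⟩ :=
      Metric.mem_nhdsWithin_iff.1 (tendsto_sub_nhds_zero_iff.2 (hf c hc) hU)
    exact ⟨δ, hδ, fun u hu hud => hball ⟨by rwa [Metric.mem_ball, Real.dist_eq], hu⟩⟩
  obtain ⟨ε, hε, hsmall⟩ : ∃ ε > 0, ∀ θ : ℝ, |θ| < ε → ∀ u ∈ C, θ • (f u - f c) ∈ U := by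
    have hD : IsCompact ((fun u => f u - f c) '' C) :=
      hC.image_of_continuousOn (hf.sub continuousOn_const)
    obtain ⟨ε, hε, hmaps⟩ := Metric.eventually_nhds_iff.1
      (((hD.isVonNBounded ℝ) hU).eventually_nhds_zero (mem_of_mem_nhds hU))
    exact ⟨ε, hε, fun θ hθ u hu =>
      hmaps (by rwa [Real.dist_eq, sub_zero]) (mem_image_of_mem _ hu)⟩
  change ∀ᶠ t in 𝓝[Icc a b] c, gapInterp C f t - f c ∈ V
  filter_upwards [inter_mem_nhdsWithin (Icc a b)
    (Metric.ball_mem_nhds c (by positivity : 0 < min (δ / 2) (δ * ε / 2)))] with t ⟨ht, htc⟩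
  rw [Metric.mem_ball, Real.dist_eq] at htc
  obtain ⟨u, hu, w, hw, huw⟩ := gapInterp_sub_mem_add hC hUb hc ⟨a, ha, ht.1⟩ ⟨b, hb, ht.2⟩
    hnear hsmall htc
  rw [← huw]
  exact hU₀V u (hUU₀ hu) w (hUU₀ hw)

theorem continuousOn_gapInterp (hC : IsCompact C) (hf : ContinuousOn f C) (ha : a ∈ C)
    (hb : b ∈ C) : ContinuousOn (gapInterp C f) (Icc a b) := by
  intro t ht
  by_cases htC : t ∈ C
  · exact continuousWithinAt_gapInterp hC hf ha hb htC
  · exact (continuousAt_gapInterp_of_notMem hC htC ⟨a, ha, ht.1⟩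
      ⟨b, hb, ht.2⟩).continuousWithinAt

theorem IsCompact.exists_continuous_extension_range_subset_convexHull (hC : IsCompact C)
    (hne : C.Nonempty) {F : C → E} (hF : Continuous F) :
    ∃ G : ℝ → E, Continuous G ∧ (∀ x : C, G x = F x) ∧ range G ⊆ convexHull ℝ (range F) := by
  set f : ℝ → E := Function.extend Subtype.val F 0
  have hfC : ∀ x : C, f x = F x := Subtype.val_injective.extend_apply F 0
  have hf : ContinuousOn f C := continuousOn_iff_continuous_domRestrict.2 (by
    convert hF using 1
    exact funext hfC)
  have hfim : f '' C = range F := by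
    rw [image_eq_range]
    exact congrArg range (funext hfC)
  have ha := hC.sInf_mem hne
  have hb := hC.sSup_mem hne
  have hmem : ∀ x ∈ C, x ∈ Icc (sInf C) (sSup C) := fun x hx =>
    ⟨csInf_le hC.bddBelow hx, le_csSup hC.bddAbove hx⟩
  refine ⟨IccExtend (hmem _ ha).2 ((Icc (sInf C) (sSup C)).domRestrict (gapInterp C f)),
    continuous_IccExtend_iff.2 (continuousOn_gapInterp hC hf ha hb).domRestrict, fun x => ?_, ?_⟩
  · rw [IccExtend_of_mem _ _ (hmem x x.2), domRestrict_apply, gapInterp_eq_self hC x.2, hfC]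
  · rw [IccExtend_range, ← hfim]
    rintro _ ⟨t, rfl⟩
    exact gapInterp_mem_convexHull hC ⟨_, ha, t.2.1⟩ ⟨_, hb, t.2.2⟩

end GapInterpolation

theorem IsCompact.exists_continuous_cantorSet_range_eq {X : Type*} [TopologicalSpace X]
    {K : Set X} (hK : IsCompact K) [MetrizableSpace K] (hne : K.Nonempty) :
    ∃ F : cantorSet → X, Continuous F ∧ range F = K := by
  let := metrizableSpaceMetric K
  have := isCompact_iff_compactSpace.1 hK
  have := hne.to_subtype
  obtain ⟨h, hh, hsurj⟩ := exists_nat_bool_continuous_surjective_of_compact K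
  refine ⟨fun x => h (cantorSetHomeomorphNatToBool x), by fun_prop, ?_⟩
  rw [range_comp', show range (fun x => h (cantorSetHomeomorphNatToBool x)) = univ from
    (hsurj.comp cantorSetHomeomorphNatToBool.surjective).range_eq, image_univ, Subtype.range_coe]

theorem stmt7_general {E : Type*} [AddCommGroup E] [Module ℝ E] [TopologicalSpace E]
    [IsTopologicalAddGroup E] [ContinuousSMul ℝ E]
    (K : Set E) (hK : IsCompact K) (hKm : TopologicalSpace.MetrizableSpace K)
    (hne : K.Nonempty) :
    ∃ g : Icc (0:ℝ) 1 → E, Continuous g ∧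
      range g ⊆ closure (convexHull ℝ K) ∧ K ⊆ range g := by
  obtain ⟨F, hF, rfl⟩ := hK.exists_continuous_cantorSet_range_eq hne
  obtain ⟨G, hG, hGF, hGrange⟩ :=
    isCompact_cantorSet.exists_continuous_extension_range_subset_convexHull
      ⟨0, zero_mem_cantorSet⟩ hF
  refine ⟨fun t => G t, hG.comp continuous_subtype_val, ?_, ?_⟩
  · rintro _ ⟨t, rfl⟩
    exact subset_closure (hGrange (mem_range_self _))
  · rintro _ ⟨x, rfl⟩
    exact ⟨⟨x, cantorSet_subset_unitInterval x.2⟩, hGF x⟩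

theorem stmt7 {E : Type*} [AddCommGroup E] [Module ℝ E] [TopologicalSpace E]
    [IsTopologicalAddGroup E] [ContinuousSMul ℝ E] [T2Space E]
    (K : Set E) (hK : IsCompact K) (hKm : TopologicalSpace.MetrizableSpace K)
    (hne : K.Nonempty) :
    ∃ g : Icc (0:ℝ) 1 → E, Continuous g ∧
      range g ⊆ closure (convexHull ℝ K) ∧ K ⊆ range g :=
  stmt7_general K hK hKm hne
end

section
/- Let μ be a non-atomic Borel probability measure on a locally convex Hausdorff space E whose support K is compact and metrizable, and let g : [0,1] → E be a continuous map with K ⊆ g([0,1]). Then there exists a non-atomic Borel probability measure ρ on [0,1] whose pushforward under g equals μ. -/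
/-!
Choose for every point `x` of the range of `g` the least point of its fiber `g ⁻¹' {x}`, which is
closed and hence contains its infimum. This section `s` is Borel, because for `a < ⊤` the set
`{x | s x ≤ a}` is the compact image `g '' Iic a`. Since `μ` lives on `K ⊆ range g`, the measure
`ρ = s_* μ` satisfies `g_* ρ = (g ∘ s)_* μ = μ`, and `ρ {t} ≤ μ {g t} = 0` because on the range of `g`,
`s x = t` forces `x = g t`.
-/

open MeasureTheory Set

section LeastPreimage

variable {X E : Type*} [CompleteLinearOrder X] {g : X → E} {x : E}

/-- Off the range of `g` the fiber is empty, so this is `⊤`. -/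
noncomputable def leastPreimage (g : X → E) (x : E) : X := sInf (g ⁻¹' {x})

theorem leastPreimage_of_notMem_range (hx : x ∉ range g) : leastPreimage g x = ⊤ := by
  rw [leastPreimage, preimage_singleton_eq_empty.mpr hx, sInf_empty]

variable [TopologicalSpace X] [OrderTopology X] [TopologicalSpace E] [T1Space E]

theorem apply_leastPreimage (hg : Continuous g) (hx : x ∈ range g) :
    g (leastPreimage g x) = x :=
  IsClosed.sInf_mem hx (isClosed_singleton.preimage hg)

theorem preimage_leastPreimage_Iic (hg : Continuous g) {a : X} (ha : a ≠ ⊤) :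
    leastPreimage g ⁻¹' Iic a = g '' Iic a := by
  ext x
  by_cases hx : x ∈ range g
  · refine ⟨fun hle => ⟨_, hle, apply_leastPreimage hg hx⟩, ?_⟩
    rintro ⟨t, hta, rfl⟩
    exact (sInf_le (show t ∈ g ⁻¹' {g t} from rfl)).trans hta
  · have hnot : x ∉ g '' Iic a := fun ⟨t, _, htx⟩ => hx ⟨t, htx⟩
    simp only [mem_preimage, mem_Iic, leastPreimage_of_notMem_range hx, top_le_iff, ha, hnot]

theorem measurable_leastPreimage [MeasurableSpace X] [BorelSpace X] [SecondCountableTopology X]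
    [T2Space E] [MeasurableSpace E] [BorelSpace E] (hg : Continuous g) :
    Measurable (leastPreimage g) := by
  refine measurable_of_Iic fun a => ?_
  rcases eq_or_ne a ⊤ with rfl | ha
  · simp only [Iic_top, preimage_univ, MeasurableSet.univ]
  rw [preimage_leastPreimage_Iic hg ha]
  exact (isClosed_Iic.isCompact.image hg).isClosed.measurableSet

end LeastPreimage

section PushforwardAlongLeastPreimage

variable {X E : Type*} [CompleteLinearOrder X] [TopologicalSpace X] [OrderTopology X]
  [SecondCountableTopology X] [MeasurableSpace X] [BorelSpace X]
  [TopologicalSpace E] [T2Space E] [MeasurableSpace E] [BorelSpace E]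
  {g : X → E} {μ : Measure E}

theorem map_map_leastPreimage (hg : Continuous g) (hμ : μ (range g)ᶜ = 0) :
    (μ.map (leastPreimage g)).map g = μ := by
  have hsection : g ∘ leastPreimage g =ᵐ[μ] id :=
    measure_mono_null (fun x hx hxg => hx (apply_leastPreimage hg hxg)) hμ
  rw [Measure.map_map hg.measurable (measurable_leastPreimage hg), Measure.map_congr hsection,
    Measure.map_id]

theorem map_leastPreimage_singleton (hg : Continuous g) (hμ : μ (range g)ᶜ = 0)
    (hna : ∀ x, μ {x} = 0) (t : X) : μ.map (leastPreimage g) {t} = 0 := by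
  rw [Measure.map_apply (measurable_leastPreimage hg) (measurableSet_singleton t)]
  have hsub : leastPreimage g ⁻¹' {t} ⊆ {g t} ∪ (range g)ᶜ := by
    intro x hx
    by_cases hxg : x ∈ range g
    · left
      rw [mem_singleton_iff, ← mem_singleton_iff.mp hx, apply_leastPreimage hg hxg]
    · exact Or.inr hxg
  exact measure_mono_null hsub (measure_union_null (hna _) hμ)

end PushforwardAlongLeastPreimage

theorem stmt8_general {E : Type*} [TopologicalSpace E]
    [T2Space E]
    [MeasurableSpace E] [BorelSpace E]
    (μ : Measure E) [IsProbabilityMeasure μ] (hna : ∀ x : E, μ {x} = 0)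
    (K : Set E)
    (hconc : μ Kᶜ = 0)
    (g : Icc (0:ℝ) 1 → E) (hg : Continuous g) (hKg : K ⊆ range g) :
    ∃ ρ : Measure (Icc (0:ℝ) 1), IsProbabilityMeasure ρ ∧
      (∀ t, ρ {t} = 0) ∧ ρ.map g = μ := by
  have hrange : μ (range g)ᶜ = 0 := measure_mono_null (compl_subset_compl.mpr hKg) hconc
  exact ⟨μ.map (leastPreimage g),
    Measure.isProbabilityMeasure_map (measurable_leastPreimage hg).aemeasurable,
    map_leastPreimage_singleton hg hrange hna, map_map_leastPreimage hg hrange⟩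

theorem stmt8 {E : Type*} [AddCommGroup E] [Module ℝ E] [TopologicalSpace E]
    [IsTopologicalAddGroup E] [ContinuousSMul ℝ E] [LocallyConvexSpace ℝ E] [T2Space E]
    [MeasurableSpace E] [BorelSpace E]
    (μ : Measure E) [IsProbabilityMeasure μ] (hna : ∀ x : E, μ {x} = 0)
    (K : Set E) (hK : IsCompact K) (hKm : TopologicalSpace.MetrizableSpace K)
    (hconc : μ Kᶜ = 0)
    (hfull : ∀ U : Set E, IsOpen U → (U ∩ K).Nonempty → 0 < μ U)
    (g : Icc (0:ℝ) 1 → E) (hg : Continuous g) (hKg : K ⊆ range g) :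
    ∃ ρ : Measure (Icc (0:ℝ) 1), IsProbabilityMeasure ρ ∧
      (∀ t, ρ {t} = 0) ∧ ρ.map g = μ :=
  stmt8_general μ hna K hconc g hg hKg
end

section
/- If for every topological space X, every metrically regular Borel measure ν on X, every bounded closed absolutely convex D ⊆ E, and every ν-Lusin-measurable g : X → E with ∫ φ_D(g(x)) dν(x) < ∞, the map g is ν-Pettis integrable, then E has the metric convex compactness property. -/
open MeasureTheory Set ENNReal Pointwise

variable {E : Type*} [AddCommGroup E] [Module ℝ E] [TopologicalSpace E]
  [IsTopologicalAddGroup E] [ContinuousSMul ℝ E] [LocallyConvexSpace ℝ E] [T2Space E]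
  [MeasurableSpace E] [BorelSpace E]

section AuxMRK
open Set Function Filter
open scoped Classical


theorem aux_scheme (M : Type*) [MetricSpace M] [CompactSpace M] [Nonempty M] :
    ∃ S : Set (ℕ → ℕ), IsCompact S ∧ S.Nonempty ∧
      ∃ π : ↥S → M, Continuous π ∧ Function.Surjective π := by
  classical
  have htb : TotallyBounded (univ : Set M) := isCompact_univ.totallyBounded
  have hnet : ∀ n : ℕ, ∃ (mm : ℕ) (c : ℕ → M),
      ∀ x : M, ∃ j < mm, dist x (c j) < (1/2 : ℝ)^n := by
    intro n
    have hε : (0:ℝ) < (1/2)^n := by positivity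
    rcases (Metric.totallyBounded_iff.mp htb _ hε) with ⟨t, htf, hcov⟩
    refine ⟨htf.toFinset.toList.length, fun j => htf.toFinset.toList.getD j (Classical.arbitrary M), fun x => ?_⟩
    have hx := hcov (mem_univ x)
    simp only [mem_iUnion] at hx
    obtain ⟨y, hyt, hxy⟩ := hx
    have hmem : y ∈ htf.toFinset.toList := by simpa using hyt
    obtain ⟨i, hi, hieq⟩ := List.getElem_of_mem hmem
    refine ⟨i, hi, ?_⟩
    have hg : htf.toFinset.toList.getD i (Classical.arbitrary M) = y := by
      rw [List.getD_eq_getElem _ _ hi]; exact hieq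
    show dist x (htf.toFinset.toList.getD i (Classical.arbitrary M)) < (1/2:ℝ)^n
    rw [hg]; exact hxy
  choose mm c hc using hnet
  set ε : ℕ → ℝ := fun n => (1/2)^n with hεdef
  have hεpos : ∀ n, 0 < ε n := fun n => by positivity
  set S : Set (ℕ → ℕ) := {y | ∀ n, y n < mm n ∧
    dist (c n (y n)) (c (n+1) (y (n+1))) ≤ ε n + ε (n+1)} with hSdef
  have hSclosed : IsClosed S := by
    have : S = ⋂ n, ((fun y : ℕ → ℕ => (y n, y (n+1))) ⁻¹'
        {p : ℕ × ℕ | p.1 < mm n ∧ dist (c n p.1) (c (n+1) p.2) ≤ ε n + ε (n+1)}) := by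
      ext y; simp [hSdef, Set.mem_iInter]
    rw [this]
    exact isClosed_iInter fun n => IsClosed.preimage (by fun_prop) (isClosed_discrete _)
  have hScpt : IsCompact S := by
    refine (isCompact_univ_pi (fun n => (Set.finite_Iio (mm n)).isCompact)).of_isClosed_subset
      hSclosed ?_
    intro y hy
    simp only [Set.mem_univ_pi, Set.mem_Iio]
    exact fun n => (hy n).1
  have hsum : ∀ (y : ℕ → ℕ), y ∈ S → ∀ n p, dist (c n (y n)) (c (n+p) (y (n+p))) ≤ 6 * ε n := by
    intro y hy n p
    have h1 : dist (c n (y n)) (c (n+p) (y (n+p))) ≤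
        ∑ i ∈ Finset.Ico n (n+p), (ε i + ε (i+1)) := by
      exact dist_le_Ico_sum_of_dist_le (f := fun k => c k (y k)) (Nat.le_add_right n p)
        (fun _ _ => (hy _).2)
    refine h1.trans ?_
    have h2 : ∀ i, ε i + ε (i+1) ≤ 3 * ε i := by
      intro i; simp only [hεdef]; rw [pow_succ]
      nlinarith [pow_pos (by norm_num : (0:ℝ) < 1/2) i]
    calc ∑ i ∈ Finset.Ico n (n+p), (ε i + ε (i+1))
        ≤ ∑ i ∈ Finset.Ico n (n+p), 3 * ε i := Finset.sum_le_sum (fun i _ => h2 i)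
      _ = 3 * ∑ i ∈ Finset.Ico n (n+p), ε i := by rw [Finset.mul_sum]
      _ ≤ 3 * (2 * ε n) := by
          gcongr
          rw [Finset.sum_Ico_eq_sum_range]
          simp only [hεdef, pow_add]
          rw [← Finset.mul_sum]
          have := sum_geometric_two_le ((n+p) - n)
          have hnn : (0:ℝ) ≤ (1/2)^n := by positivity
          calc (1/2:ℝ)^n * ∑ i ∈ Finset.range ((n+p)-n), (1/2)^i
              ≤ (1/2)^n * 2 := by
                apply mul_le_mul_of_nonneg_left _ hnn
                simpa [one_div] using this
            _ = 2 * ε n := by rw [hεdef]; ring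
      _ = 6 * ε n := by ring
  -- the approximating sequence is Cauchy, define π as its limit
  have hεmon : ∀ {a b : ℕ}, a ≤ b → ε b ≤ ε a := by
    intro a b hab
    simp only [hεdef]
    exact pow_le_pow_of_le_one (by norm_num) (by norm_num) hab
  have hcauchy : ∀ y : ↥S, CauchySeq (fun n => c n ((y : ℕ → ℕ) n)) := by
    intro y
    apply cauchySeq_of_le_tendsto_0 (b := fun n => 6 * ε n)
    · intro i j k hki hkj
      rcases le_total i j with hij | hij
      · obtain ⟨p, rfl⟩ := Nat.exists_eq_add_of_le hij
        refine le_trans (hsum y y.2 i p) ?_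
        have := hεmon hki; linarith
      · obtain ⟨p, rfl⟩ := Nat.exists_eq_add_of_le hij
        rw [dist_comm]
        refine le_trans (hsum y y.2 j p) ?_
        have := hεmon hkj; linarith
    · have h0 : Filter.Tendsto (fun n : ℕ => (1/2:ℝ)^n) Filter.atTop (nhds 0) :=
        tendsto_pow_atTop_nhds_zero_of_lt_one (by norm_num : (0:ℝ) ≤ 1/2) (by norm_num)
      have h1 := h0.const_mul (6:ℝ)
      rw [mul_zero] at h1
      exact h1
  have hlim : ∀ y : ↥S, ∃ x : M, Filter.Tendsto (fun n => c n ((y : ℕ → ℕ) n)) Filter.atTop (nhds x) :=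
    fun y => cauchySeq_tendsto_of_complete (hcauchy y)
  choose π hπ using hlim
  have hπdist : ∀ (y : ↥S) (n : ℕ), dist (c n ((y:ℕ→ℕ) n)) (π y) ≤ 6 * ε n := by
    intro y n
    have h2 : Filter.Tendsto (fun p => c (n+p) ((y:ℕ→ℕ) (n+p))) Filter.atTop (nhds (π y)) := by
      have h3 := (hπ y).comp (Filter.tendsto_add_atTop_nat n)
      exact h3.congr (fun p => by simp [Function.comp, Nat.add_comm])
    have h4 : Filter.Tendsto (fun p => dist (c n ((y:ℕ→ℕ) n)) (c (n+p) ((y:ℕ→ℕ) (n+p)))) Filter.atTop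
        (nhds (dist (c n ((y:ℕ→ℕ) n)) (π y))) :=
      Filter.Tendsto.dist tendsto_const_nhds h2
    exact le_of_tendsto h4 (Filter.Eventually.of_forall fun p => hsum y y.2 n p)
  refine ⟨S, hScpt, ?_, π, ?_, ?_⟩
  · -- nonempty
    obtain ⟨x⟩ := ‹Nonempty M›
    choose j hj hjd using fun n => hc n x
    refine ⟨fun n => j n, fun n => ⟨hj n, ?_⟩⟩
    calc dist (c n (j n)) (c (n+1) (j (n+1)))
        ≤ dist (c n (j n)) x + dist x (c (n+1) (j (n+1))) := dist_triangle _ _ _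
      _ ≤ ε n + ε (n+1) := by
          have := hjd n; have := hjd (n+1)
          rw [dist_comm (c n (j n)) x]
          exact add_le_add (le_of_lt ‹_›) (le_of_lt ‹_›)
  · -- continuity
    rw [continuous_iff_continuousAt]
    intro y
    rw [ContinuousAt, Metric.tendsto_nhds]
    intro δ hδ
    obtain ⟨n, hn⟩ : ∃ n : ℕ, 12 * ε n < δ := by
      obtain ⟨n, hn⟩ := exists_pow_lt_of_lt_one (by positivity : (0:ℝ) < δ/12) (by norm_num : (1/2:ℝ) < 1)
      refine ⟨n, ?_⟩
      have : ε n < δ / 12 := hn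
      linarith
    have hopen : IsOpen {z : ↥S | (z : ℕ → ℕ) n = (y : ℕ → ℕ) n} := by
      have hcont : Continuous (fun z : ↥S => (z : ℕ → ℕ) n) := (continuous_apply n).comp continuous_subtype_val
      exact hcont.isOpen_preimage {(y : ℕ → ℕ) n} (isOpen_discrete _)
    have hmem : {z : ↥S | (z : ℕ → ℕ) n = (y : ℕ → ℕ) n} ∈ nhds y := hopen.mem_nhds rfl
    refine Filter.eventually_of_mem hmem (fun z hzn => ?_)
    calc dist (π z) (π y)
        ≤ dist (π z) (c n ((z:ℕ→ℕ) n)) + dist (c n ((z:ℕ→ℕ) n)) (π y) := dist_triangle _ _ _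
      _ ≤ 6 * ε n + 6 * ε n := by
          rw [dist_comm (π z)]
          exact add_le_add (hπdist z n) (by rw [show (z:ℕ→ℕ) n = (y:ℕ→ℕ) n from hzn]; exact hπdist y n)
      _ < δ := by linarith
  · -- surjectivity
    intro x
    choose j hj hjd using fun n => hc n x
    have hyS : (fun n => j n) ∈ S := by
      refine fun n => ⟨hj n, ?_⟩
      calc dist (c n (j n)) (c (n+1) (j (n+1)))
          ≤ dist (c n (j n)) x + dist x (c (n+1) (j (n+1))) := dist_triangle _ _ _
        _ ≤ ε n + ε (n+1) := by
            rw [dist_comm (c n (j n)) x]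
            exact add_le_add (le_of_lt (hjd n)) (le_of_lt (hjd (n+1)))
    refine ⟨⟨fun n => j n, hyS⟩, ?_⟩
    have h1 : Filter.Tendsto (fun n => c n (j n)) Filter.atTop (nhds x) := by
      rw [Metric.tendsto_atTop]
      intro δ hδ
      obtain ⟨n, hn⟩ := exists_pow_lt_of_lt_one hδ (by norm_num : (1/2:ℝ) < 1)
      refine ⟨n, fun p hp => ?_⟩
      rw [dist_comm]
      calc dist x (c p (j p)) < ε p := hjd p
        _ ≤ (1/2)^n := hεmon hp
        _ < δ := hn
    exact tendsto_nhds_unique (hπ ⟨fun n => j n, hyS⟩) h1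


noncomputable def indCM {X : Type*} [TopologicalSpace X] (A : Set X) (hA : IsClopen A) :
    C(X, ℝ) := by
  refine ⟨fun y => if y ∈ A then (1:ℝ) else 0, ?_⟩
  refine IsLocallyConstant.continuous ?_
  intro s
  by_cases h1 : (1:ℝ) ∈ s <;> by_cases h0 : (0:ℝ) ∈ s
  · convert isOpen_univ
    ext y; by_cases hy : y ∈ A <;> simp [hy, h1, h0]
  · convert hA.2
    ext y; by_cases hy : y ∈ A <;> simp [hy, h1, h0]
  · convert hA.compl.2
    ext y; by_cases hy : y ∈ A <;> simp [hy, h1, h0]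
  · convert isOpen_empty
    ext y; by_cases hy : y ∈ A <;> simp [hy, h1, h0]

@[simp] lemma indCM_apply {X : Type*} [TopologicalSpace X] (A : Set X) (hA : IsClopen A) (y : X) :
    indCM A hA y = if y ∈ A then (1:ℝ) else 0 := rfl

theorem aux_rmk (S : Set (ℕ → ℕ)) (hS : IsCompact S) (hne : S.Nonempty)
    (Λ : C(↥S, ℝ) →ₗ[ℝ] ℝ)
    (hmono : ∀ f g : C(↥S, ℝ), (∀ y, f y ≤ g y) → Λ f ≤ Λ g)
    (hone : Λ 1 = 1) :
    ∃ ν : Measure ↥S, IsProbabilityMeasure ν ∧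
      ∀ f : C(↥S, ℝ), ∫ y, f y ∂ν = Λ f := by
  haveI : CompactSpace ↥S := isCompact_iff_compactSpace.mp hS
  haveI : Nonempty ↥S := hne.to_subtype
  -- positivity facts
  have hnn : ∀ (A : Set ↥S) (hA : IsClopen A), 0 ≤ Λ (indCM A hA) := by
    intro A hA
    have h0 : Λ 0 ≤ Λ (indCM A hA) := hmono 0 _ (fun y => by by_cases hy : y ∈ A <;> simp [hy])
    simpa using h0
  have hle1 : ∀ (A : Set ↥S) (hA : IsClopen A), Λ (indCM A hA) ≤ 1 := by
    intro A hA
    have h0 : Λ (indCM A hA) ≤ Λ 1 := hmono _ 1 (fun y => by by_cases hy : y ∈ A <;> simp [hy])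
    simpa [hone] using h0
  -- the generating function
  set m : Set ↥S → ENNReal := fun A =>
    if h : IsClopen A then ENNReal.ofReal (Λ (indCM A h)) else ⊤ with hmdef
  have hm0 : m ∅ = 0 := by
    have hce : IsClopen (∅ : Set ↥S) := isClopen_empty
    have he : indCM (∅ : Set ↥S) hce = 0 := by ext y; simp
    simp only [hmdef, dif_pos hce, he]
    simp
  set μ : OuterMeasure ↥S := OuterMeasure.ofFunction m hm0 with hμdef
  have hmclopen : ∀ (A : Set ↥S) (hA : IsClopen A), m A = ENNReal.ofReal (Λ (indCM A hA)) :=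
    fun A hA => dif_pos hA
  -- outer measure value on clopen sets
  have key1 : ∀ (A : Set ↥S) (hA : IsClopen A), μ A = ENNReal.ofReal (Λ (indCM A hA)) := by
    intro A hA
    refine le_antisymm ((OuterMeasure.ofFunction_le A).trans_eq (hmclopen A hA)) ?_
    rw [hμdef, OuterMeasure.ofFunction_apply]
    refine le_iInf fun t => le_iInf fun hcov => ?_
    by_cases hall : ∀ n, IsClopen (t n)
    · -- finite subcover
      have hAcpt : IsCompact A := hA.isClosed.isCompact
      obtain ⟨F, hF⟩ := hAcpt.elim_finite_subcover t (fun n => (hall n).isOpen) hcov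
      have hpt : ∀ y, indCM A hA y ≤ (∑ n ∈ F, indCM (t n) (hall n)) y := by
        intro y
        rw [ContinuousMap.coe_sum, Finset.sum_apply]
        by_cases hy : y ∈ A
        · obtain ⟨n, hnF, hnt⟩ := Set.mem_iUnion₂.mp (hF hy)
          calc indCM A hA y = 1 := by simp [hy]
            _ = indCM (t n) (hall n) y := by simp [hnt]
            _ ≤ ∑ n ∈ F, indCM (t n) (hall n) y :=
                Finset.single_le_sum (f := fun n => indCM (t n) (hall n) y)
                  (fun i _ => by by_cases h : y ∈ t i <;> simp [h]) hnF
        · calc indCM A hA y = 0 := by simp [hy]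
            _ ≤ _ := Finset.sum_nonneg (fun i _ => by by_cases h : y ∈ t i <;> simp [h])
      have hΛle : Λ (indCM A hA) ≤ ∑ n ∈ F, Λ (indCM (t n) (hall n)) := by
        rw [← map_sum]
        exact hmono _ _ hpt
      calc ENNReal.ofReal (Λ (indCM A hA)) ≤ ENNReal.ofReal (∑ n ∈ F, Λ (indCM (t n) (hall n))) :=
            ENNReal.ofReal_le_ofReal hΛle
        _ = ∑ n ∈ F, ENNReal.ofReal (Λ (indCM (t n) (hall n))) :=
            ENNReal.ofReal_sum_of_nonneg (fun i _ => hnn _ _)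
        _ = ∑ n ∈ F, m (t n) := by
            refine Finset.sum_congr rfl fun n _ => (hmclopen _ (hall n)).symm
        _ ≤ ∑' n, m (t n) := ENNReal.summable.sum_le_tsum F (fun _ _ => zero_le)
    · push_neg at hall
      obtain ⟨n0, hn0⟩ := hall
      have h1 : m (t n0) = ⊤ := dif_neg hn0
      have h2 : (⊤ : ENNReal) ≤ ∑' n, m (t n) := by
        rw [← h1]; exact ENNReal.le_tsum n0
      exact le_trans le_top h2
  -- Caratheodory measurability of clopen sets
  have hcar : ∀ (A : Set ↥S), IsClopen A → μ.caratheodory.MeasurableSet' A := by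
    intro A hA
    refine OuterMeasure.ofFunction_caratheodory (fun t => ?_)
    by_cases ht : IsClopen t
    · rw [hmclopen _ (ht.inter hA), hmclopen _ (ht.diff hA), hmclopen _ ht,
        ← ENNReal.ofReal_add (hnn _ _) (hnn _ _)]
      refine ENNReal.ofReal_le_ofReal (le_of_eq ?_)
      have heq : indCM (t ∩ A) (ht.inter hA) + indCM (t \ A) (ht.diff hA) = indCM t ht := by
        ext y
        by_cases h1 : y ∈ t <;> by_cases h2 : y ∈ A <;> simp [h1, h2]
      calc Λ (indCM (t ∩ A) (ht.inter hA)) + Λ (indCM (t \ A) (ht.diff hA))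
          = Λ (indCM (t ∩ A) (ht.inter hA) + indCM (t \ A) (ht.diff hA)) := (map_add Λ _ _).symm
        _ = Λ (indCM t ht) := by rw [heq]
    · have hmt : m t = ⊤ := dif_neg ht
      rw [hmt]
      exact le_top
  -- cylinders
  have hτcont : ∀ N : ℕ, Continuous (fun y : ↥S => (fun i : Fin N => (y : ℕ → ℕ) i)) := by
    intro N
    refine continuous_pi (fun i => ?_)
    exact (continuous_apply (i : ℕ)).comp continuous_subtype_val
  set Cyl : (Σ N : ℕ, (Fin N → ℕ)) → Set ↥S :=
    fun p => (fun y : ↥S => (fun i : Fin p.1 => (y : ℕ → ℕ) i)) ⁻¹' {p.2} with hCyldef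
  have hCylclopen : ∀ p, IsClopen (Cyl p) := fun p => (isClopen_discrete _).preimage (hτcont p.1)
  have hbasis : ∀ (O : Set ↥S), IsOpen O → ∀ y ∈ O, ∃ N : ℕ,
      Cyl ⟨N, fun i => (y : ℕ → ℕ) i⟩ ⊆ O ∧ y ∈ Cyl ⟨N, fun i => (y : ℕ → ℕ) i⟩ := by
    intro O hO y hy
    obtain ⟨O', hO', rfl⟩ := isOpen_induced_iff.mp hO
    obtain ⟨I, u, hu, hsub⟩ := isOpen_pi_iff.mp hO' (y : ℕ → ℕ) hy
    refine ⟨(I.sup id) + 1, fun z hz => ?_, by simp [hCyldef]⟩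
    simp only [hCyldef, Set.mem_preimage, Set.mem_singleton_iff] at hz
    have hzy : ∀ a ∈ I, (z : ℕ → ℕ) a = (y : ℕ → ℕ) a := by
      intro a ha
      have haN : a < (I.sup id) + 1 := Nat.lt_succ_of_le (Finset.le_sup (f := id) ha)
      exact congrFun hz ⟨a, haN⟩
    refine hsub ?_
    intro a ha
    rw [hzy a ha]
    exact (hu a ha).2
  have hcarO : ∀ (O : Set ↥S), IsOpen O → μ.caratheodory.MeasurableSet' O := by
    intro O hO
    have hOeq : O = ⋃ p ∈ {p | Cyl p ⊆ O}, Cyl p := by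
      apply Set.Subset.antisymm
      · intro y hy
        obtain ⟨N, hsub, hmem⟩ := hbasis O hO y hy
        exact Set.mem_biUnion hsub hmem
      · intro y hy
        obtain ⟨p, hp, hyp⟩ := Set.mem_iUnion₂.mp hy
        exact hp hyp
    rw [hOeq]
    exact MeasurableSet.biUnion (Set.to_countable _) (fun p _ => hcar _ (hCylclopen p))
  have hle : (inferInstance : MeasurableSpace ↥S) ≤ μ.caratheodory := by
    rw [BorelSpace.measurable_eq (α := ↥S)]
    exact MeasurableSpace.generateFrom_le (fun s hs => hcarO s hs)
  set ν : Measure ↥S := μ.toMeasure hle with hνdef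
  have hνA : ∀ (A : Set ↥S) (hA : IsClopen A), ν A = ENNReal.ofReal (Λ (indCM A hA)) := by
    intro A hA
    rw [hνdef]
    exact (MeasureTheory.toMeasure_apply μ hle hA.isOpen.measurableSet).trans (key1 A hA)
  have hν1 : ν Set.univ = 1 := by
    rw [hνA Set.univ isClopen_univ]
    have : indCM (Set.univ : Set ↥S) isClopen_univ = 1 := by ext y; simp
    rw [this, hone]
    simp
  haveI hprob : IsProbabilityMeasure ν := ⟨hν1⟩
  refine ⟨ν, hprob, ?_⟩
  -- integrability of continuous functions
  have hint : ∀ u : C(↥S, ℝ), Integrable (fun y => u y) ν := by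
    intro u
    refine Integrable.mono' (integrable_const ‖u‖) u.continuous.aestronglyMeasurable ?_
    exact Filter.Eventually.of_forall (fun y => u.norm_coe_le_norm y)
  -- representation
  intro f
  have habs : ∀ ε : ℝ, 0 < ε → |∫ y, f y ∂ν - Λ f| ≤ ε := by
    intro ε hε
    set ε' : ℝ := ε / 2 with hε'def
    have hε' : 0 < ε' := by positivity
    -- uniform "oscillation" level N
    have hN : ∃ N : ℕ, ∀ y z : ↥S,
        (fun i : Fin N => (y : ℕ → ℕ) i) = (fun i : Fin N => (z : ℕ → ℕ) i) →
        |f y - f z| ≤ ε' := by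
      have hcover : ∀ y : ↥S, ∃ N : ℕ, ∀ z ∈ Cyl ⟨N, fun i => (y : ℕ → ℕ) i⟩, |f z - f y| < ε' / 2 := by
        intro y
        have hOopen : IsOpen (f ⁻¹' Metric.ball (f y) (ε' / 2)) :=
          f.continuous.isOpen_preimage _ Metric.isOpen_ball
        have hymem : y ∈ f ⁻¹' Metric.ball (f y) (ε' / 2) := by
          simp [Metric.mem_ball, hε']
        obtain ⟨N, hsub, _⟩ := hbasis _ hOopen y hymem
        refine ⟨N, fun z hz => ?_⟩
        have := hsub hz
        simpa [Metric.mem_ball, Real.dist_eq] using this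
      choose NN hNN using hcover
      obtain ⟨Y, hY⟩ := isCompact_univ.elim_finite_subcover
        (fun y : ↥S => Cyl ⟨NN y, fun i => (y : ℕ → ℕ) i⟩)
        (fun y => (hCylclopen _).isOpen)
        (by intro y _
            refine Set.mem_iUnion.mpr ⟨y, ?_⟩
            simp [hCyldef])
      refine ⟨Y.sup NN, fun y z hyz => ?_⟩
      obtain ⟨y0, hy0Y, hy0⟩ := Set.mem_iUnion₂.mp (hY (Set.mem_univ y))
      have hy0' : y ∈ Cyl ⟨NN y0, fun i => (y0 : ℕ → ℕ) i⟩ := hy0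
      have hNle : NN y0 ≤ Y.sup NN := Finset.le_sup hy0Y
      have hz0 : z ∈ Cyl ⟨NN y0, fun i => (y0 : ℕ → ℕ) i⟩ := by
        simp only [hCyldef, Set.mem_preimage, Set.mem_singleton_iff] at hy0' ⊢
        funext i
        have hi : (i : ℕ) < Y.sup NN := lt_of_lt_of_le i.2 hNle
        have h1 : (z : ℕ → ℕ) i = (y : ℕ → ℕ) i :=
          (congrFun hyz.symm ⟨(i : ℕ), hi⟩ : _)
        rw [h1]
        exact congrFun hy0' i
      have h1 := hNN y0 y hy0'
      have h2 := hNN y0 z hz0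
      calc |f y - f z| ≤ |f y - f y0| + |f y0 - f z| := abs_sub_le _ _ _
        _ ≤ ε' / 2 + ε' / 2 := by
            rw [abs_sub_comm (f y0) (f z)]
            exact add_le_add (le_of_lt h1) (le_of_lt h2)
        _ = ε' := by ring
    obtain ⟨N, hoscN⟩ := hN
    set τ : ↥S → (Fin N → ℕ) := fun y => (fun i : Fin N => (y : ℕ → ℕ) i) with hτdef
    have hτc : Continuous τ := hτcont N
    have hfin : (Set.range τ).Finite := (isCompact_range hτc).finite ⟨inferInstance⟩
    set P : Finset (Fin N → ℕ) := hfin.toFinset with hPdef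
    have hfibclopen : ∀ t : Fin N → ℕ, IsClopen (τ ⁻¹' {t}) :=
      fun t => (isClopen_discrete _).preimage hτc
    -- representative points
    have hrepex : ∀ t ∈ P, ∃ y : ↥S, τ y = t := by
      intro t ht
      rw [hPdef, Set.Finite.mem_toFinset] at ht
      exact ht
    set rep : (Fin N → ℕ) → ↥S := fun t =>
      if h : ∃ y : ↥S, τ y = t then h.choose else Classical.arbitrary ↥S with hrepdef
    have hrep : ∀ t ∈ P, τ (rep t) = t := by
      intro t ht
      have hex : ∃ y : ↥S, τ y = t := hrepex t ht
      rw [hrepdef]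
      simp only [dif_pos hex]
      exact hex.choose_spec
    set sfun : C(↥S, ℝ) := ∑ t ∈ P, f (rep t) • indCM (τ ⁻¹' {t}) (hfibclopen t) with hsdef
    have hsval : ∀ y : ↥S, sfun y = f (rep (τ y)) := by
      intro y
      rw [hsdef]
      rw [ContinuousMap.coe_sum, Finset.sum_apply]
      have hyP : τ y ∈ P := by
        rw [hPdef, Set.Finite.mem_toFinset]
        exact Set.mem_range_self y
      rw [Finset.sum_eq_single (τ y)]
      · simp
      · intro t htP htne
        simp only [ContinuousMap.coe_smul, Pi.smul_apply, indCM_apply, Set.mem_preimage,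
          Set.mem_singleton_iff]
        rw [if_neg (fun h => htne h.symm)]
        simp
      · intro h
        exact absurd hyP h
    have hclose : ∀ y : ↥S, |f y - sfun y| ≤ ε' := by
      intro y
      rw [hsval y]
      have hyP : τ y ∈ P := by
        rw [hPdef, Set.Finite.mem_toFinset]; exact Set.mem_range_self y
      refine hoscN y (rep (τ y)) ?_
      have := hrep (τ y) hyP
      exact this.symm
    -- Λ sfun = ∫ sfun
    have hfib_meas : ∀ t, MeasurableSet (τ ⁻¹' {t}) := fun t => (hfibclopen t).isOpen.measurableSet
    have hΛs : Λ sfun = ∑ t ∈ P, f (rep t) * Λ (indCM (τ ⁻¹' {t}) (hfibclopen t)) := by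
      rw [hsdef, map_sum]
      refine Finset.sum_congr rfl (fun t _ => ?_)
      rw [_root_.map_smul]
      simp [smul_eq_mul]
    have hints : ∫ y, sfun y ∂ν = ∑ t ∈ P, f (rep t) * Λ (indCM (τ ⁻¹' {t}) (hfibclopen t)) := by
      have hptw : (fun y => sfun y) =
          (fun y => ∑ t ∈ P, f (rep t) * (Set.indicator (τ ⁻¹' {t}) (fun _ => (1:ℝ)) y)) := by
        funext y
        rw [hsdef, ContinuousMap.coe_sum, Finset.sum_apply]
        refine Finset.sum_congr rfl (fun t _ => ?_)
        simp only [ContinuousMap.coe_smul, Pi.smul_apply, indCM_apply, smul_eq_mul]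
        rw [Set.indicator_apply]
      rw [hptw, integral_finset_sum]
      · refine Finset.sum_congr rfl (fun t _ => ?_)
        rw [integral_const_mul, integral_indicator_const (1:ℝ) (hfib_meas t)]
        rw [measureReal_def, hνA _ (hfibclopen t)]
        rw [ENNReal.toReal_ofReal (hnn _ _)]
        simp
      · intro t _
        refine Integrable.const_mul ?_ _
        rw [integrable_indicator_iff (hfib_meas t)]
        exact (integrable_const _).integrableOn
    have hdiff1 : |∫ y, f y ∂ν - ∫ y, sfun y ∂ν| ≤ ε' := by
      rw [← integral_sub (hint f) (hint sfun)]
      have hb : ∀ y, ‖f y - sfun y‖ ≤ ε' := fun y => by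
        rw [Real.norm_eq_abs]; exact hclose y
      calc |∫ y, (f y - sfun y) ∂ν| = ‖∫ y, (f y - sfun y) ∂ν‖ := (Real.norm_eq_abs _).symm
        _ ≤ ε' * (ν Set.univ).toReal :=
            norm_integral_le_of_norm_le_const (Filter.Eventually.of_forall hb)
        _ = ε' := by rw [hν1]; simp
    have hdiff2 : |Λ sfun - Λ f| ≤ ε' := by
      have h1 : Λ sfun - Λ f = Λ (sfun - f) := by rw [map_sub]
      rw [h1, abs_le]
      constructor
      · have : ∀ y : ↥S, (-(ε' • (1 : C(↥S,ℝ)))) y ≤ (sfun - f) y := by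
          intro y
          simp only [ContinuousMap.neg_apply, ContinuousMap.smul_apply, ContinuousMap.one_apply,
            ContinuousMap.sub_apply, smul_eq_mul, mul_one]
          have := hclose y
          rw [abs_le] at this
          linarith [this.2]
        have hh := hmono _ _ this
        rw [map_neg, _root_.map_smul] at hh
        simpa [hone] using hh
      · have : ∀ y : ↥S, (sfun - f) y ≤ (ε' • (1 : C(↥S,ℝ))) y := by
          intro y
          simp only [ContinuousMap.smul_apply, ContinuousMap.one_apply,
            ContinuousMap.sub_apply, smul_eq_mul, mul_one]
          have := hclose y
          rw [abs_le] at this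
          linarith [this.1]
        have hh := hmono _ _ this
        rw [_root_.map_smul] at hh
        simpa [hone] using hh
    calc |∫ y, f y ∂ν - Λ f|
        ≤ |∫ y, f y ∂ν - ∫ y, sfun y ∂ν| + |∫ y, sfun y ∂ν - Λ f| := abs_sub_le _ _ _
      _ = |∫ y, f y ∂ν - ∫ y, sfun y ∂ν| + |Λ sfun - Λ f| := by rw [hints, ← hΛs]
      _ ≤ ε' + ε' := add_le_add hdiff1 hdiff2
      _ = ε := by rw [hε'def]; ring
  have : |∫ y, f y ∂ν - Λ f| ≤ 0 := by
    refine le_of_forall_pos_le_add (fun ε hε => ?_)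
    simpa using habs ε hε
  have h0 : |∫ y, f y ∂ν - Λ f| = 0 := le_antisymm this (abs_nonneg _)
  have := abs_eq_zero.mp h0
  linarith [this]


theorem aux_weak_to_strong {E : Type*} [AddCommGroup E] [Module ℝ E] [UniformSpace E]
    [IsUniformAddGroup E] [ContinuousSMul ℝ E] [LocallyConvexSpace ℝ E]
    (U : Ultrafilter E) (hCau : Cauchy (U : Filter E)) (v : E)
    (hweak : ∀ e' : E →L[ℝ] ℝ, Filter.Tendsto e' U (nhds (e' v))) :
    (U : Filter E) ≤ nhds v := by
  have hgoal : Filter.Tendsto (fun x : E => x - v) U (nhds 0) → (U : Filter E) ≤ nhds v :=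
    fun h => (tendsto_sub_nhds_zero_iff (u := fun x : E => x) (x := v) (l := (U : Filter E))).mp h
  refine hgoal ?_
  intro s hs
  simp only [Filter.mem_map]
  obtain ⟨W₁, hW₁, hW₁add⟩ := exists_nhds_zero_half hs
  obtain ⟨W₂', hW₂', hW₂add'⟩ := exists_nhds_zero_half hW₁
  have hnegmem : ∀ {A : Set E}, A ∈ nhds (0:E) → -A ∈ nhds (0:E) := by
    intro A hA
    have h := (continuous_neg (G := E)).tendsto 0
    rw [neg_zero] at h
    have := h hA
    exact this
  set W₂ : Set E := (W₂' ∩ -W₂') ∩ (W₁ ∩ -W₁) with hW₂def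
  have hW₂ : W₂ ∈ nhds 0 :=
    Filter.inter_mem (Filter.inter_mem hW₂' (hnegmem hW₂')) (Filter.inter_mem hW₁ (hnegmem hW₁))
  have hW₂symm : ∀ x ∈ W₂, -x ∈ W₂ := by
    rintro x ⟨⟨h1, h2⟩, h3, h4⟩
    exact ⟨⟨Set.mem_neg.mp h2, Set.neg_mem_neg.mpr h1⟩, Set.mem_neg.mp h4, Set.neg_mem_neg.mpr h3⟩
  have hW₂W₂' : W₂ ⊆ W₂' := fun x hx => hx.1.1
  have hW₂W₁ : W₂ ⊆ W₁ := fun x hx => hx.2.1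
  obtain ⟨V, ⟨hVmem, hVconv⟩, hVsub⟩ := (LocallyConvexSpace.convex_basis (𝕜 := ℝ) (0:E)).mem_iff.mp hW₂
  set V'' : Set E := V ∩ -V with hV''def
  have hV''mem : V'' ∈ nhds 0 := Filter.inter_mem hVmem (hnegmem hVmem)
  have hV''conv : Convex ℝ V'' := hVconv.inter hVconv.neg
  have hV''symm : ∀ x ∈ V'', -x ∈ V'' := by
    rintro x ⟨h1, h2⟩
    exact ⟨Set.mem_neg.mp h2, Set.neg_mem_neg.mpr h1⟩
  have hV''W₂ : V'' ⊆ W₂ := fun x hx => hVsub hx.1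
  -- Cauchy: get A ∈ U with differences in V''
  have hent : {p : E × E | p.2 - p.1 ∈ V''} ∈ uniformity E := by
    rw [uniformity_eq_comap_nhds_zero]
    exact Filter.preimage_mem_comap hV''mem
  have hprod := hCau.2 hent
  obtain ⟨A1, hA1, A2, hA2, hA12⟩ := Filter.mem_prod_iff.mp hprod
  set A : Set E := A1 ∩ A2 with hAdef
  have hAU : A ∈ U := Filter.inter_mem hA1 hA2
  have hAdiff : ∀ a ∈ A, ∀ b ∈ A, b - a ∈ V'' := by
    intro a ha b hb
    exact hA12 (Set.mk_mem_prod ha.1 hb.2)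
  obtain ⟨a₀, ha₀⟩ := Ultrafilter.nonempty_of_mem hAU
  -- v - a₀ is in the closure of V''
  have hclconv : Convex ℝ (closure V'') := hV''conv.closure
  have hclclosed : IsClosed (closure V'') := isClosed_closure
  have hkey : v - a₀ ∈ closure V'' := by
    by_contra hvc
    set s0 : Set E := {x | x - a₀ ∈ closure V''} with hs0def
    have hs0eq : s0 = (fun z => a₀ + z) '' (closure V'') := by
      ext x
      constructor
      · intro hx; exact ⟨x - a₀, hx, by module⟩
      · rintro ⟨z, hz, rfl⟩
        show a₀ + z - a₀ ∈ closure V''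
        rwa [add_sub_cancel_left]
    have hs0conv : Convex ℝ s0 := hs0eq ▸ hclconv.translate a₀
    have hs0closed : IsClosed s0 := by
      have : Continuous (fun x : E => x - a₀) := continuous_id.sub continuous_const
      exact hclclosed.preimage this
    have hvs0 : v ∉ s0 := hvc
    obtain ⟨f, u, hfs, hfv⟩ := geometric_hahn_banach_closed_point hs0conv hs0closed hvs0
    have hAs0 : A ⊆ s0 := by
      intro a ha
      exact subset_closure (hAdiff a₀ ha₀ a ha)
    have hev : ∀ᶠ x in (U : Filter E), f x ≤ u :=
      Filter.eventually_of_mem hAU (fun x hx => le_of_lt (hfs x (hAs0 hx)))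
    have := le_of_tendsto (hweak f) hev
    linarith
  -- closure V'' ⊆ V'' + W₂ (elementwise)
  have hclsub : ∀ x ∈ closure V'', ∃ p ∈ V'', ∃ q ∈ W₂, x = p + q := by
    intro x hx
    have hnx : (fun z => x + z) '' W₂ ∈ nhds x := by
      rw [← map_add_left_nhds_zero x]
      exact Filter.image_mem_map hW₂
    obtain ⟨y, hy1, hy2⟩ := mem_closure_iff_nhds.mp hx _ hnx
    obtain ⟨w, hw, rfl⟩ := hy1
    refine ⟨x + w, hy2, -w, hW₂symm w hw, by abel⟩
  obtain ⟨p, hp, q, hq, hpq⟩ := hclsub _ hkey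
  -- conclude
  refine Filter.mem_of_superset hAU ?_
  intro a ha
  show a - v ∈ s
  have h1 : a - a₀ ∈ V'' := hAdiff a₀ ha₀ a ha
  have h2 : a - v = ((a - a₀) + (-p)) + (-q) := by
    have h3 : a - v = (a - a₀) - (v - a₀) := by abel
    rw [h3, hpq]
    abel
  rw [h2]
  refine hW₁add _ ?_ _ (hW₂W₁ (hW₂symm q hq))
  refine hW₂add' _ (hW₂W₂' (hV''W₂ h1)) _ (hW₂W₂' (hV''W₂ (hV''symm p hp)))

end AuxMRK

/-- The (possibly infinite) gauge functional of a set `D`. -/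
noncomputable def gaugeFn (D : Set E) (e : E) : ℝ≥0∞ :=
  sInf {t : ℝ≥0∞ | ∃ r : ℝ, 0 < r ∧ t = ENNReal.ofReal r ∧ e ∈ r • D}

/-- A Borel measure is metrically regular if every Borel set has measure the supremum of
the measures of its compact metrizable subsets. -/
def MetricallyRegular {X : Type*} [TopologicalSpace X] [MeasurableSpace X]
    (ν : Measure X) : Prop :=
  ∀ B : Set X, MeasurableSet B →
    ν B = ⨆ (K : Set X) (_ : K ⊆ B) (_ : IsCompact K)
      (_ : TopologicalSpace.MetrizableSpace K), ν K

/-- `g` is `ν`-Lusin-measurable. -/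
def LusinMeasurable {X : Type*} [TopologicalSpace X] [MeasurableSpace X]
    (ν : Measure X) (g : X → E) : Prop :=
  ∀ B : Set X, MeasurableSet B →
    ν B = ⨆ (K : Set X) (_ : K ⊆ B) (_ : IsCompact K) (_ : ContinuousOn g K), ν K

theorem stmt12
    (h : ∀ (X : Type) [TopologicalSpace X] [T2Space X] [MeasurableSpace X] [BorelSpace X]
      (ν : Measure X) [IsFiniteMeasure ν], MetricallyRegular ν →
      ∀ D : Set E, Bornology.IsVonNBounded ℝ D → IsClosed D → Convex ℝ D → Balanced ℝ D →
      ∀ g : X → E, LusinMeasurable ν g → (∫⁻ x, gaugeFn D (g x) ∂ν) < ⊤ →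
      ∃ v : E, IsPettisIntegral ν g v) :
    MetricConvexCompactness E := by
  classical
  intro K hK hKmet
  rcases K.eq_empty_or_nonempty with rfl | hKne
  · simpa [convexHull_empty, closure_empty] using isCompact_empty
  letI : UniformSpace E := IsTopologicalAddGroup.rightUniformSpace E
  haveI : IsUniformAddGroup E := isUniformAddGroup_of_addCommGroup
  set C : Set E := closure (convexHull ℝ K) with hCdef
  have htbC : TotallyBounded C := (totallyBounded_convexHull.mpr hK.totallyBounded).closure
  rw [isCompact_iff_ultrafilter_le_nhds]
  intro U hU
  have hCU : C ∈ U := hU (Filter.mem_principal_self C)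
  have hCau : Cauchy (U : Filter E) := totallyBounded_iff_ultrafilter.mp htbC U hU
  -- K as a compact metric space, and the Cantor-like parametrization
  haveI : CompactSpace ↥K := isCompact_iff_compactSpace.mp hK
  letI : MetricSpace ↥K := TopologicalSpace.metrizableSpaceMetric ↥K
  haveI : Nonempty ↥K := hKne.to_subtype
  obtain ⟨S, hScpt, hSne, π, hπc, hπs⟩ := aux_scheme ↥K
  haveI : CompactSpace ↥S := isCompact_iff_compactSpace.mp hScpt
  haveI : Nonempty ↥S := hSne.to_subtype
  set g : ↥S → E := fun y => ((π y : ↥K) : E) with hgdef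
  have hgc : Continuous g := continuous_subtype_val.comp hπc
  have hgK : ∀ y, g y ∈ K := fun y => (π y).2
  -- ultrafilter limits of continuous linear functionals
  have hbd : ∀ e' : E →L[ℝ] ℝ, ∃ r : ℝ, Filter.Tendsto e' U (nhds r) := by
    intro e'
    have h1 : Bornology.IsVonNBounded ℝ (e' '' C) := (htbC.isVonNBounded ℝ).image e'
    have h2 : Bornology.IsBounded (e' '' C) := by
      rwa [← NormedSpace.isVonNBounded_iff ℝ]
    have h3 : IsCompact (closure (e' '' C)) := h2.isCompact_closure
    have h4 : (↑(U.map e') : Filter ℝ) ≤ Filter.principal (closure (e' '' C)) := by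
      rw [Filter.le_principal_iff]
      exact Filter.mem_of_superset (Filter.image_mem_map hCU) subset_closure
    obtain ⟨r, _, hr⟩ := h3.ultrafilter_le_nhds (U.map e') h4
    exact ⟨r, hr⟩
  choose ℓ hℓ using hbd
  have hℓadd : ∀ e1 e2 : E →L[ℝ] ℝ, ℓ (e1 + e2) = ℓ e1 + ℓ e2 := by
    intro e1 e2
    refine tendsto_nhds_unique (hℓ (e1 + e2)) ?_
    have := (hℓ e1).add (hℓ e2)
    exact this.congr (fun x => rfl)
  have hℓsmul : ∀ (a : ℝ) (e' : E →L[ℝ] ℝ), ℓ (a • e') = a * ℓ e' := by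
    intro a e'
    refine tendsto_nhds_unique (hℓ (a • e')) ?_
    have := (hℓ e').const_mul a
    exact this.congr (fun x => rfl)
  have hℓzero : ℓ 0 = 0 := by
    refine tendsto_nhds_unique (hℓ 0) ?_
    exact tendsto_const_nhds.congr (fun x => rfl)
  have hℓneg : ∀ e' : E →L[ℝ] ℝ, ℓ (-e') = - ℓ e' := by
    intro e'
    have := hℓsmul (-1) e'
    rw [show (-1:ℝ) • e' = -e' from by ext; simp] at this
    simpa [neg_smul, one_smul] using this
  -- lower bound: ℓ e' is at least the minimum of e' on K
  have hℓlow : ∀ e' : E →L[ℝ] ℝ, ∀ x₁ ∈ K, (∀ x ∈ K, e' x₁ ≤ e' x) → e' x₁ ≤ ℓ e' := by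
    intro e' x₁ hx₁K hx₁min
    have hhalf : Convex ℝ {x : E | e' x₁ ≤ e' x} := by
      refine convex_halfSpace_ge ?_ _
      exact ⟨fun a b => map_add e' a b, fun r x => map_smul e' r x⟩
    have hclosed : IsClosed {x : E | e' x₁ ≤ e' x} :=
      isClosed_le continuous_const e'.continuous
    have hCsub : C ⊆ {x : E | e' x₁ ≤ e' x} := by
      rw [hCdef]
      refine closure_minimal (convexHull_min (fun x hx => hx₁min x hx) hhalf) hclosed
    refine ge_of_tendsto (hℓ e') ?_
    exact Filter.eventually_of_mem hCU (fun x hx => hCsub hx)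
  -- continuous map associated to a pair (e', c)
  set Tm : (E →L[ℝ] ℝ) × ℝ → C(↥S, ℝ) := fun ec =>
    ⟨fun y => ec.1 (g y) + ec.2, (ec.1.continuous.comp hgc).add continuous_const⟩ with hTmdef
  have hTmapp : ∀ ec (y : ↥S), Tm ec y = ec.1 (g y) + ec.2 := fun ec y => rfl
  -- supremum of a continuous function on the compact nonempty space ↥S
  set Msup : C(↥S, ℝ) → ℝ := fun u => ⨆ y, u y with hMsupdef
  have hbdd : ∀ u : C(↥S, ℝ), BddAbove (Set.range fun y => u y) := by
    intro u
    obtain ⟨y0, -, hy0⟩ := isCompact_univ.exists_isMaxOn univ_nonempty u.continuous.continuousOn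
    exact ⟨u y0, by rintro r ⟨y, rfl⟩; exact hy0 (mem_univ y)⟩
  have hMle : ∀ (u : C(↥S, ℝ)) (y : ↥S), u y ≤ Msup u := fun u y => le_ciSup (hbdd u) y
  have hMsup_le : ∀ (u : C(↥S, ℝ)) (r : ℝ), (∀ y, u y ≤ r) → Msup u ≤ r :=
    fun u r hr => ciSup_le hr
  have hMattain : ∀ u : C(↥S, ℝ), ∃ y0, Msup u = u y0 ∧ ∀ y, u y ≤ u y0 := by
    intro u
    obtain ⟨y0, -, hy0⟩ := isCompact_univ.exists_isMaxOn univ_nonempty u.continuous.continuousOn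
    have hmax : ∀ y, u y ≤ u y0 := fun y => hy0 (mem_univ y)
    exact ⟨y0, le_antisymm (hMsup_le u _ hmax) (hMle u y0), hmax⟩
  have hMsup_smul : ∀ (a : ℝ), 0 ≤ a → ∀ u : C(↥S, ℝ), Msup (a • u) = a * Msup u := by
    intro a ha u
    obtain ⟨y0, hy0, hmax⟩ := hMattain u
    refine le_antisymm (hMsup_le _ _ (fun y => ?_)) ?_
    · have : (a • u) y = a * u y := rfl
      rw [this, hy0]
      exact mul_le_mul_of_nonneg_left (hmax y) ha
    · rw [hy0]
      have : a * u y0 = (a • u) y0 := rfl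
      rw [this]
      exact hMle _ y0
  have hMsup_zero : Msup 0 = 0 := by
    refine le_antisymm (hMsup_le _ _ (fun y => le_rfl)) ?_
    have := hMle 0 (Classical.arbitrary ↥S)
    simpa using this
  -- the sublinear functional
  set Q : C(↥S, ℝ) → (E →L[ℝ] ℝ) × ℝ → ℝ := fun f ec => Msup (f - Tm ec) + (ℓ ec.1 + ec.2)
    with hQdef
  -- lower bound for Q
  have hQlb : ∀ (f : C(↥S, ℝ)) ec, ∃ y1 : ↥S, f y1 ≤ Q f ec := by
    intro f ec
    -- minimum of ec.1 on K
    obtain ⟨x₁, hx₁K, hx₁min⟩ := hK.exists_isMinOn hKne ec.1.continuous.continuousOn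
    obtain ⟨y1, hy1⟩ := hπs ⟨x₁, hx₁K⟩
    have hg1 : g y1 = x₁ := by rw [hgdef]; simp [hy1]
    have hlow : ec.1 x₁ + ec.2 ≤ ℓ ec.1 + ec.2 := by
      have := hℓlow ec.1 x₁ hx₁K (fun x hx => hx₁min hx)
      linarith
    refine ⟨y1, ?_⟩
    have h1 : f y1 - (ec.1 (g y1) + ec.2) ≤ Msup (f - Tm ec) := by
      have := hMle (f - Tm ec) y1
      simpa [hTmapp, sub_eq_add_neg] using this
    rw [hQdef]
    rw [hg1] at h1
    simp only at h1 ⊢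
    linarith
  set p : C(↥S, ℝ) → ℝ := fun f => sInf (Set.range (Q f)) with hpdef
  have hpne : ∀ f : C(↥S, ℝ), (Set.range (Q f)).Nonempty := fun f => ⟨Q f (0, 0), ⟨(0,0), rfl⟩⟩
  have hpbdd : ∀ f : C(↥S, ℝ), BddBelow (Set.range (Q f)) := by
    intro f
    obtain ⟨ymin, -, hymin⟩ := isCompact_univ.exists_isMinOn univ_nonempty f.continuous.continuousOn
    refine ⟨f ymin, ?_⟩
    rintro r ⟨ec, rfl⟩
    obtain ⟨y1, hy1⟩ := hQlb f ec
    exact le_trans (hymin (mem_univ y1)) hy1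
  have hple : ∀ (f : C(↥S, ℝ)) ec, p f ≤ Q f ec := fun f ec => csInf_le (hpbdd f) ⟨ec, rfl⟩
  have hlep : ∀ (f : C(↥S, ℝ)) (r : ℝ), (∀ ec, r ≤ Q f ec) → r ≤ p f :=
    fun f r hr => le_csInf (hpne f) (by rintro b ⟨ec, rfl⟩; exact hr ec)
  -- subadditivity
  have hQsub : ∀ (f1 f2 : C(↥S, ℝ)) ec1 ec2, Q (f1 + f2) (ec1 + ec2) ≤ Q f1 ec1 + Q f2 ec2 := by
    intro f1 f2 ec1 ec2
    rw [hQdef]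
    simp only
    have h1 : Msup (f1 + f2 - Tm (ec1 + ec2)) ≤ Msup (f1 - Tm ec1) + Msup (f2 - Tm ec2) := by
      refine hMsup_le _ _ (fun y => ?_)
      have e1 := hMle (f1 - Tm ec1) y
      have e2 := hMle (f2 - Tm ec2) y
      have hval : (f1 + f2 - Tm (ec1 + ec2)) y =
          (f1 - Tm ec1) y + (f2 - Tm ec2) y := by
        simp only [ContinuousMap.sub_apply, ContinuousMap.add_apply, hTmapp,
          Prod.fst_add, Prod.snd_add, ContinuousLinearMap.add_apply]
        ring
      rw [hval]
      exact add_le_add e1 e2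
    have h2 : ℓ (ec1 + ec2).1 = ℓ ec1.1 + ℓ ec2.1 := by
      rw [Prod.fst_add, hℓadd]
    rw [h2, Prod.snd_add]
    linarith
  have hpsub : ∀ f1 f2 : C(↥S, ℝ), p (f1 + f2) ≤ p f1 + p f2 := by
    intro f1 f2
    refine le_of_forall_pos_le_add (fun δ hδ => ?_)
    obtain ⟨a1, ⟨ec1, rfl⟩, ha1⟩ := exists_lt_of_csInf_lt (hpne f1)
      (lt_add_of_pos_right (p f1) (half_pos hδ))
    obtain ⟨a2, ⟨ec2, rfl⟩, ha2⟩ := exists_lt_of_csInf_lt (hpne f2)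
      (lt_add_of_pos_right (p f2) (half_pos hδ))
    calc p (f1 + f2) ≤ Q (f1 + f2) (ec1 + ec2) := hple _ _
      _ ≤ Q f1 ec1 + Q f2 ec2 := hQsub f1 f2 ec1 ec2
      _ ≤ (p f1 + δ/2) + (p f2 + δ/2) := add_le_add (le_of_lt ha1) (le_of_lt ha2)
      _ = p f1 + p f2 + δ := by ring
  -- positive homogeneity
  have hQsmul : ∀ (a : ℝ), 0 < a → ∀ (f : C(↥S, ℝ)) ec, Q (a • f) (a • ec) = a * Q f ec := by
    intro a ha f ec
    rw [hQdef]
    simp only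
    have h1 : (a • f - Tm (a • ec)) = a • (f - Tm ec) := by
      ext y
      simp only [ContinuousMap.sub_apply, ContinuousMap.smul_apply, hTmapp, Prod.smul_fst,
        Prod.smul_snd, ContinuousLinearMap.smul_apply, smul_eq_mul]
      ring
    rw [h1, hMsup_smul a (le_of_lt ha), Prod.smul_fst, Prod.smul_snd, hℓsmul]
    simp only [smul_eq_mul]
    ring
  have hpsmul : ∀ (a : ℝ), 0 < a → ∀ f : C(↥S, ℝ), p (a • f) = a * p f := by
    have hhalf : ∀ (a : ℝ), 0 < a → ∀ f : C(↥S, ℝ), p (a • f) ≤ a * p f := by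
      intro a ha f
      have h1 : ∀ ec, p (a • f) ≤ a * Q f ec := by
        intro ec
        rw [← hQsmul a ha f ec]
        exact hple _ _
      have h2 : p (a • f) / a ≤ p f := by
        refine hlep f _ (fun ec => ?_)
        rw [div_le_iff₀ ha, mul_comm]
        exact h1 ec
      calc p (a • f) = a * (p (a • f) / a) := by field_simp
        _ ≤ a * p f := mul_le_mul_of_nonneg_left h2 (le_of_lt ha)
    intro a ha f
    refine le_antisymm (hhalf a ha f) ?_
    have h3 := hhalf a⁻¹ (inv_pos.mpr ha) (a • f)
    rw [inv_smul_smul₀ (ne_of_gt ha)] at h3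
    calc a * p f ≤ a * (a⁻¹ * p (a • f)) := mul_le_mul_of_nonneg_left h3 (le_of_lt ha)
      _ = p (a • f) := by field_simp
  -- p 0 is nonnegative
  have hp0 : 0 ≤ p 0 := by
    refine hlep 0 0 (fun ec => ?_)
    obtain ⟨y1, hy1⟩ := hQlb 0 ec
    simpa using hy1
  -- Hahn-Banach
  obtain ⟨Λ₀, hΛ₀ext, hΛ₀le⟩ := exists_extension_of_le_sublinear
    ⟨(⊥ : Submodule ℝ C(↥S, ℝ)), 0⟩ p
    (fun c hc x => hpsmul c hc x) (fun x y => hpsub x y)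
    (by rintro ⟨x, hx⟩
        rw [Submodule.mem_bot] at hx
        subst hx
        simpa using hp0)
  -- key identities for Λ₀
  have hΛT : ∀ ec, Λ₀ (Tm ec) = ℓ ec.1 + ec.2 := by
    intro ec
    have hup : Λ₀ (Tm ec) ≤ ℓ ec.1 + ec.2 := by
      refine le_trans (hΛ₀le (Tm ec)) ?_
      refine le_trans (hple _ ec) ?_
      rw [hQdef]
      simp only [sub_self, hMsup_zero]
      simp
    have hTneg : Tm (-ec) = -(Tm ec) := by
      ext y
      simp only [hTmapp, ContinuousMap.neg_apply, Prod.fst_neg, Prod.snd_neg,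
        ContinuousLinearMap.neg_apply]
      ring
    have hdown : Λ₀ (-(Tm ec)) ≤ -(ℓ ec.1 + ec.2) := by
      rw [← hTneg]
      refine le_trans (hΛ₀le (Tm (-ec))) ?_
      refine le_trans (hple _ (-ec)) ?_
      rw [hQdef]
      simp only [sub_self, hMsup_zero, Prod.fst_neg, Prod.snd_neg, hℓneg]
      simp
    rw [map_neg] at hdown
    linarith
  have hmono' : ∀ f1 f2 : C(↥S, ℝ), (∀ y, f1 y ≤ f2 y) → Λ₀ f1 ≤ Λ₀ f2 := by
    intro f1 f2 h12
    have h1 : Λ₀ f1 - Λ₀ f2 = Λ₀ (f1 - f2) := by rw [map_sub]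
    have h2 : Λ₀ (f1 - f2) ≤ p (f1 - f2) := hΛ₀le _
    have h3 : p (f1 - f2) ≤ Q (f1 - f2) (0, 0) := hple _ _
    have h4 : Q (f1 - f2) (0, 0) ≤ 0 := by
      rw [hQdef]
      simp only [hℓzero]
      have h5 : Msup (f1 - f2 - Tm (0, 0)) ≤ 0 := by
        refine hMsup_le _ _ (fun y => ?_)
        simp only [ContinuousMap.sub_apply, hTmapp, ContinuousLinearMap.zero_apply]
        have := h12 y
        linarith
      linarith
    linarith
  have hone' : Λ₀ 1 = 1 := by
    have h1 : (1 : C(↥S, ℝ)) = Tm (0, 1) := by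
      ext y
      simp [hTmapp]
    rw [h1, hΛT]
    simp [hℓzero]
  -- the representing measure
  obtain ⟨ν, hνprob, hνrep⟩ := aux_rmk S hScpt hSne Λ₀ hmono' hone'
  haveI : IsProbabilityMeasure ν := hνprob
  -- the bounded closed absolutely convex set D
  set D : Set E := closure (absConvexHull ℝ K) with hDdef
  have hDb : Bornology.IsVonNBounded ℝ D :=
    ((totallyBounded_absConvexHull.mpr hK.totallyBounded).closure).isVonNBounded ℝ
  have hDclosed : IsClosed D := isClosed_closure
  have hDconv : Convex ℝ D := (convex_absConvexHull (𝕜 := ℝ)).closure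
  have hDbal : Balanced ℝ D := (balanced_absConvexHull (𝕜 := ℝ)).closure
  have hKD : K ⊆ D := le_trans (subset_absConvexHull (𝕜 := ℝ)) subset_closure
  -- inner regularity
  haveI : ν.InnerRegularCompactLTTop := inferInstance
  have hinner : MetricallyRegular ν := by
    intro B hB
    refine le_antisymm ?_ ?_
    · refine ENNReal.le_of_forall_pos_le_add (fun ε hε _ => ?_)
      obtain ⟨K', hK'B, hK'c, hK'lt⟩ := hB.exists_isCompact_lt_add (measure_ne_top ν B)
        (by exact_mod_cast (ne_of_gt hε) : (ε : ℝ≥0∞) ≠ 0)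
      refine le_trans (le_of_lt hK'lt) (add_le_add_left ?_ _)
      refine le_iSup_of_le K' ?_
      refine le_iSup_of_le hK'B ?_
      refine le_iSup_of_le hK'c ?_
      exact le_iSup_of_le inferInstance le_rfl
    · refine iSup_le (fun K' => iSup_le (fun hK'B => iSup_le (fun _ => iSup_le (fun _ => ?_))))
      exact measure_mono hK'B
  have hLusin : LusinMeasurable ν g := by
    intro B hB
    refine le_antisymm ?_ ?_
    · refine ENNReal.le_of_forall_pos_le_add (fun ε hε _ => ?_)
      obtain ⟨K', hK'B, hK'c, hK'lt⟩ := hB.exists_isCompact_lt_add (measure_ne_top ν B)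
        (by exact_mod_cast (ne_of_gt hε) : (ε : ℝ≥0∞) ≠ 0)
      refine le_trans (le_of_lt hK'lt) (add_le_add_left ?_ _)
      refine le_iSup_of_le K' ?_
      refine le_iSup_of_le hK'B ?_
      refine le_iSup_of_le hK'c ?_
      exact le_iSup_of_le hgc.continuousOn le_rfl
    · refine iSup_le (fun K' => iSup_le (fun hK'B => iSup_le (fun _ => iSup_le (fun _ => ?_))))
      exact measure_mono hK'B
  -- finiteness of the gauge integral
  have hgauge : (∫⁻ x, gaugeFn D (g x) ∂ν) < ⊤ := by
    have hle1 : ∀ y, gaugeFn D (g y) ≤ 1 := by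
      intro y
      refine sInf_le ?_
      refine ⟨1, one_pos, ENNReal.ofReal_one.symm, ?_⟩
      rw [show (1:ℝ) • D = D from one_smul ℝ D]
      exact hKD (hgK y)
    calc (∫⁻ x, gaugeFn D (g x) ∂ν) ≤ ∫⁻ _, 1 ∂ν := lintegral_mono hle1
      _ = ν Set.univ := lintegral_one
      _ < ⊤ := measure_lt_top ν _
  -- apply the Pettis integrability hypothesis
  obtain ⟨v, hv⟩ := h ↥S ν hinner D hDb hDclosed hDconv hDbal g hLusin hgauge
  -- the ultrafilter converges weakly to v
  have hweak : ∀ e' : E →L[ℝ] ℝ, Filter.Tendsto e' U (nhds (e' v)) := by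
    intro e'
    have h1 : e' v = ∫ x, e' (g x) ∂ν := (hv e').2
    have h2 : (∫ x, e' (g x) ∂ν) = Λ₀ (Tm (e', 0)) := by
      rw [← hνrep (Tm (e', 0))]
      refine integral_congr_ae (Filter.Eventually.of_forall (fun y => ?_))
      simp [hTmapp]
    have h3 : e' v = ℓ e' := by
      rw [h1, h2, hΛT]
      simp
    rw [h3]
    exact hℓ e'
  have hconv : (U : Filter E) ≤ nhds v := aux_weak_to_strong U hCau v hweak
  refine ⟨v, ?_, hconv⟩
  have hvmem : v ∈ closure C := mem_closure_iff_ultrafilter.mpr ⟨U, hCU, hconv⟩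
  have hCclosed : IsClosed C := by rw [hCdef]; exact isClosed_closure
  rwa [hCclosed.closure_eq] at hvmem
end

section
/- Let E be a real locally convex Hausdorff space with the metric convex compactness property. Then every finite metrically regular Borel measure μ concentrated on a bounded subset D of E has a barycenter in E. -/
open MeasureTheory Set

variable {E : Type*} [AddCommGroup E] [Module ℝ E] [TopologicalSpace E]
  [IsTopologicalAddGroup E] [ContinuousSMul ℝ E] [LocallyConvexSpace ℝ E] [T2Space E]
  [MeasurableSpace E] [BorelSpace E]

open Filter Topology Bornology
open scoped ENNReal

/-!
Restrict `μ` to compact metrizable sets `K n` with `μ (K n)ᶜ < 4⁻¹ ^ (n + 1)`. The closed convex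
hull of `K n` is compact, so each restriction has a barycenter `r n`. Testing against functionals
bounded on `D` shows that `2 ^ (n + 1) • (r (n + 1) - r n) ∈ 2⁻¹ ^ n • closedConvexHull (D ∪ -D)`,
so these increments tend to `0`; with `0` they form a compact metrizable set `L`. The differences
`r n - r 0` are sub-convex combinations of points of `L`, so they stay in the compact set
`closure (convexHull L)`, and `r 0` plus a cluster point of them is a barycenter of `μ`.
-/

section Topology

variable {X : Type*} [TopologicalSpace X] [MeasurableSpace X]

theorem MetricallyRegular.exists_isCompact_metrizableSpace_measure_compl_lt [T2Space X]
    [OpensMeasurableSpace X] {ν : Measure X} [IsFiniteMeasure ν] (hν : MetricallyRegular ν) {ε : ℝ≥0∞} (hε : ε ≠ 0) :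
    ∃ K : Set X, IsCompact K ∧ TopologicalSpace.MetrizableSpace K ∧ ν Kᶜ < ε := by
  rcases eq_or_ne (ν univ) 0 with h0 | h0
  · exact ⟨∅, isCompact_empty, inferInstance, by simpa [h0] using pos_iff_ne_zero.2 hε⟩
  have hlt : ν univ - ε < ν univ := ENNReal.sub_lt_self (measure_ne_top _ _) h0 hε
  conv_rhs at hlt => rw [hν univ .univ]
  simp only [lt_iSup_iff, exists_prop] at hlt
  obtain ⟨K, -, hK, hKm, hlt⟩ := hlt
  refine ⟨K, hK, hKm, ?_⟩
  rw [measure_compl hK.measurableSet (measure_ne_top _ _)]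
  exact ENNReal.sub_lt_of_sub_lt (measure_mono (subset_univ K)) (.inl (measure_ne_top _ _)) hlt

theorem Continuous.integrable_of_ae_mem_isCompact [T2Space X] [OpensMeasurableSpace X]
    {F : Type*} [NormedAddCommGroup F] {ν : Measure X} [IsFiniteMeasure ν] {f : X → F}
    {C : Set X} (hf : Continuous f) (hC : IsCompact C) (hν : ∀ᵐ x ∂ν, x ∈ C) :
    Integrable f ν := by
  rw [← Measure.restrict_eq_self_of_ae_mem hν]
  exact hf.continuousOn.integrableOn_compact hC

end Topology

section TopologicalVectorSpace

variable {V : Type*} [AddCommGroup V] [Module ℝ V]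

theorem sum_range_half_pow_smul_mem_convexHull_insert_zero (a : ℕ → V) (n : ℕ) :
    ∑ k ∈ Finset.range n, (1 / 2 : ℝ) ^ (k + 1) • a k ∈ convexHull ℝ (insert 0 (range a)) := by
  induction n generalizing a with
  | zero => exact subset_convexHull ℝ _ (mem_insert 0 _)
  | succ n ih =>
    have hshift :
        convexHull ℝ (insert 0 (range (a ∘ Nat.succ))) ⊆ convexHull ℝ (insert 0 (range a)) :=
      convexHull_mono (insert_subset_insert (range_comp_subset_range _ _))
    have hmid := convex_convexHull ℝ (insert 0 (range a))
      (subset_convexHull ℝ _ (mem_insert_of_mem 0 (mem_range_self 0))) (hshift (ih (a ∘ Nat.succ)))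
      (by norm_num : (0 : ℝ) ≤ 1 / 2) (by norm_num : (0 : ℝ) ≤ 1 / 2) (by norm_num)
    convert hmid using 1
    rw [Finset.sum_range_succ', Finset.smul_sum, add_comm]
    simp only [Function.comp_apply, pow_succ' (1 / 2 : ℝ) (_ + 1), mul_smul, zero_add, pow_one]

variable [TopologicalSpace V]

theorem Bornology.IsVonNBounded.exists_forall_abs_le {D : Set V} (hD : IsVonNBounded ℝ D)
    (e' : V →L[ℝ] ℝ) : ∃ M, ∀ z ∈ D, |e' z| ≤ M := by
  obtain ⟨M, hM⟩ :=
    isBounded_iff_forall_norm_le.1 ((NormedSpace.isVonNBounded_iff ℝ).1 (hD.image e'))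
  exact ⟨M, fun z hz => hM _ (mem_image_of_mem e' hz)⟩

theorem Bornology.IsVonNBounded.convexHull [LocallyConvexSpace ℝ V] {s : Set V}
    (hs : IsVonNBounded ℝ s) :
    IsVonNBounded ℝ (convexHull ℝ s) := by
  intro U hU
  obtain ⟨W, ⟨hW, hWc⟩, hWU⟩ := (LocallyConvexSpace.convex_basis_zero ℝ V).mem_iff.mp hU
  filter_upwards [hs hW] with c hc
  exact (convexHull_min hc (hWc.smul c)).trans (smul_set_mono hWU)

theorem exists_forall_apply_eq_of_tendsto {Q : Set V} (hQ : IsCompact Q) {r : ℕ → V}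
    (hrQ : ∀ n, r n ∈ Q) {I : (V →L[ℝ] ℝ) → ℝ}
    (hI : ∀ e', Tendsto (fun n => e' (r n)) atTop (𝓝 (I e'))) :
    ∃ x ∈ Q, ∀ e' : V →L[ℝ] ℝ, e' x = I e' := by
  obtain ⟨x, hxQ, hx⟩ := hQ.exists_clusterPt
    (tendsto_principal.2 (.of_forall hrQ) : Tendsto r atTop (𝓟 Q))
  refine ⟨x, hxQ, fun e' => eq_of_nhds_neBot ?_⟩
  exact (MapClusterPt.continuousAt_comp e'.continuous.continuousAt hx).clusterPt.mono (hI e')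
    |>.neBot

theorem IsCompact.metrizableSpace_of_countable [SeparatingDual ℝ V] {K : Set V}
    (hK : IsCompact K) (hKc : K.Countable) : TopologicalSpace.MetrizableSpace K := by
  have : Countable K := hKc.to_subtype
  have : CompactSpace K := isCompact_iff_compactSpace.1 hK
  have hsep (p : K × K) : ∃ f : V →L[ℝ] ℝ, p.1 ≠ p.2 → f p.1 ≠ f p.2 := by
    by_cases h : p.1 = p.2
    · exact ⟨0, fun h' => (h' h).elim⟩
    · obtain ⟨f, hf⟩ := SeparatingDual.exists_separating_of_ne (R := ℝ) (Subtype.coe_ne_coe.2 h)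
      exact ⟨f, fun _ => hf⟩
  choose f hf using hsep
  let Φ : K → K × K → ℝ := fun y p => f p y
  have hΦ : Continuous Φ := continuous_pi fun p => (f p).continuous.comp continuous_subtype_val
  have hΦinj : Function.Injective Φ := fun a b hab =>
    by_contra fun hne => hf (a, b) hne (congrFun hab (a, b))
  exact (hΦ.isClosedEmbedding hΦinj).isEmbedding.metrizableSpace

variable [IsTopologicalAddGroup V] [ContinuousSMul ℝ V] [LocallyConvexSpace ℝ V]

theorem Bornology.IsVonNBounded.closedConvexHull [T1Space V] {s : Set V}
    (hs : IsVonNBounded ℝ s) : IsVonNBounded ℝ (closedConvexHull ℝ s) := by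
  rw [closedConvexHull_eq_closure_convexHull]
  exact hs.convexHull.closure

theorem mem_closedConvexHull_union_neg_of_forall_abs_le {S : Set V} {x : V}
    (hx : ∀ (e' : V →L[ℝ] ℝ) (M : ℝ), (∀ z ∈ S, |e' z| ≤ M) → |e' x| ≤ M) :
    x ∈ closedConvexHull ℝ (S ∪ -S) := by
  by_contra hmem
  obtain ⟨f, u, hfu, hux⟩ :=
    geometric_hahn_banach_closed_point convex_closedConvexHull isClosed_closedConvexHull hmem
  have hS : ∀ z ∈ S, |f z| ≤ u := fun z hz => by
    have h₁ := hfu z (subset_closedConvexHull (Or.inl hz))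
    have h₂ := hfu (-z) (subset_closedConvexHull (Or.inr (by simpa using hz)))
    rw [map_neg] at h₂
    exact abs_le.2 ⟨by linarith, h₁.le⟩
  linarith [hx f u hS, le_abs_self (f x)]

end TopologicalVectorSpace

section Barycenter

variable {V : Type*} [AddCommGroup V] [Module ℝ V] [TopologicalSpace V] [MeasurableSpace V]
  [OpensMeasurableSpace V]

theorem IsBarycenter.abs_sub_integral_le {μ : Measure V} [IsFiniteMeasure μ] {K : Set V}
    (hK : MeasurableSet K) {r : V} (hr : IsBarycenter (μ.restrict K) r) (e' : V →L[ℝ] ℝ)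
    {M ε : ℝ} (hM₀ : 0 ≤ M) (hM : ∀ᵐ y ∂μ, |e' y| ≤ M) (hε : μ.real Kᶜ ≤ ε) :
    |e' r - ∫ y, e' y ∂μ| ≤ M * ε := by
  have hint : Integrable (fun y => e' y) μ :=
    (integrable_const M).mono' e'.continuous.aestronglyMeasurable hM
  rw [(hr e').2, ← integral_add_compl hK hint, sub_add_cancel_left, abs_neg]
  calc |∫ y in Kᶜ, e' y ∂μ| ≤ M * μ.real Kᶜ := by
        simpa only [Real.norm_eq_abs] using
          norm_setIntegral_le_of_norm_le_const_ae (f := fun y => e' y) (measure_lt_top μ Kᶜ)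
            (ae_restrict_of_ae (by simpa only [Real.norm_eq_abs] using hM))
    _ ≤ M * ε := by gcongr

variable [T2Space V] {ν : Measure V} [IsFiniteMeasure ν] {C : Set V}

theorem IsCompact.exists_mem_forall_apply_eq_average [NeZero ν] (hC : IsCompact C)
    (hCc : Convex ℝ C) (hν : ∀ᵐ y ∂ν, y ∈ C) :
    ∃ b ∈ C, ∀ e' : V →L[ℝ] ℝ, e' b = ⨍ y, e' y ∂ν := by
  have hint (e' : V →L[ℝ] ℝ) : Integrable (fun y => e' y) ν :=
    e'.continuous.integrable_of_ae_mem_isCompact hC hν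
  suffices h : ∀ u : Finset (V →L[ℝ] ℝ), (C ∩ ⋂ e' ∈ u, {y | e' y = ⨍ z, e' z ∂ν}).Nonempty by
    obtain ⟨b, hbC, hb⟩ :=
      hC.inter_iInter_nonempty _ (fun e' => isClosed_eq e'.continuous continuous_const) h
    exact ⟨b, hbC, by simpa using hb⟩
  intro u
  let T : V →L[ℝ] (u → ℝ) := ContinuousLinearMap.pi fun e' => e'
  have hT : ⨍ y, T y ∂ν ∈ T '' C :=
    (hCc.linear_image T.toLinearMap).average_mem (hC.image T.continuous).isClosed
      (hν.mono fun y hy => mem_image_of_mem T hy) (Integrable.of_eval fun e' => hint e')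
  obtain ⟨b, hbC, hb⟩ := hT
  refine ⟨b, hbC, mem_iInter₂.2 fun e' he' => ?_⟩
  have := congrFun hb ⟨e', he'⟩
  rw [average_eq, Pi.smul_apply, eval_integral (f := fun y => T y) fun i => hint i] at this
  simpa [average_eq, T] using this

theorem IsCompact.exists_isBarycenter (hC : IsCompact C) (hCc : Convex ℝ C)
    (hν : ∀ᵐ y ∂ν, y ∈ C) : ∃ r, IsBarycenter ν r := by
  have hint (e' : V →L[ℝ] ℝ) : Integrable (fun y => e' y) ν :=
    e'.continuous.integrable_of_ae_mem_isCompact hC hν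
  rcases eq_zero_or_neZero ν with rfl | _
  · exact ⟨0, fun e' => ⟨hint e', by simp⟩⟩
  obtain ⟨b, -, hb⟩ := hC.exists_mem_forall_apply_eq_average hCc hν
  exact ⟨ν.real univ • b, fun e' => ⟨hint e', by rw [map_smul, hb, measure_smul_average]⟩⟩

end Barycenter

section MetricConvexCompactness

variable {V : Type*} [AddCommGroup V] [Module ℝ V] [TopologicalSpace V] [IsTopologicalAddGroup V]
  [ContinuousSMul ℝ V] [LocallyConvexSpace ℝ V] {D : Set V} {r : ℕ → V} {I : (V →L[ℝ] ℝ) → ℝ}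

theorem two_mul_four_pow_smul_sub_mem_closedConvexHull (hDne : D.Nonempty)
    (hr : ∀ (e' : V →L[ℝ] ℝ) (M : ℝ), (∀ z ∈ D, |e' z| ≤ M) →
      ∀ n, |e' (r n) - I e'| ≤ M * (1 / 4) ^ (n + 1)) (n : ℕ) :
    (2 * 4 ^ n : ℝ) • (r (n + 1) - r n) ∈ closedConvexHull ℝ (D ∪ -D) := by
  refine mem_closedConvexHull_union_neg_of_forall_abs_le fun e' M hM => ?_
  obtain ⟨z, hz⟩ := hDne
  have hM₀ : 0 ≤ M := (abs_nonneg _).trans (hM z hz)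
  calc |e' ((2 * 4 ^ n : ℝ) • (r (n + 1) - r n))|
      = 2 * 4 ^ n * |(e' (r (n + 1)) - I e') - (e' (r n) - I e')| := by
        rw [map_smul, map_sub, smul_eq_mul, abs_mul, abs_of_pos (by positivity),
          sub_sub_sub_cancel_right]
    _ ≤ 2 * 4 ^ n * (M * (1 / 4) ^ (n + 2) + M * (1 / 4) ^ (n + 1)) := by
        gcongr
        exact (abs_sub _ _).trans (add_le_add (hr e' M hM _) (hr e' M hM n))
    _ = 5 / 8 * M * (4 ^ n * (1 / 4) ^ n) := by ring
    _ ≤ M := by rw [← mul_pow]; norm_num; linarith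

theorem MetricConvexCompactness.exists_forall_apply_eq_of_abs_sub_le [T2Space V]
    (hE : MetricConvexCompactness V) (hD : IsVonNBounded ℝ D) (hDne : D.Nonempty)
    (hr : ∀ (e' : V →L[ℝ] ℝ) (M : ℝ), (∀ z ∈ D, |e' z| ≤ M) →
      ∀ n, |e' (r n) - I e'| ≤ M * (1 / 4) ^ (n + 1)) :
    ∃ x : V, ∀ e' : V →L[ℝ] ℝ, e' x = I e' := by
  set a : ℕ → V := fun n => (2 : ℝ) ^ (n + 1) • (r (n + 1) - r n)
  have ha : Tendsto a atTop (𝓝 0) := by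
    have := (hD.union hD.neg).closedConvexHull.smul_tendsto_zero
      (.of_forall (two_mul_four_pow_smul_sub_mem_closedConvexHull hDne hr))
      (tendsto_pow_atTop_nhds_zero_of_lt_one (r := (1 / 2 : ℝ)) (by norm_num) (by norm_num))
    refine this.congr fun n => ?_
    simp only [Pi.smul_apply', a, smul_smul]
    congr 1
    rw [pow_succ, show (4 : ℝ) = 2 * 2 by norm_num, mul_pow, one_div_pow]
    field_simp
  have hL := ha.isCompact_insert_range
  have hQ := hE _ hL (hL.metrizableSpace_of_countable ((countable_range a).insert 0))
  have hsum (n : ℕ) : r n - r 0 = ∑ k ∈ Finset.range n, (1 / 2 : ℝ) ^ (k + 1) • a k := by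
    rw [← Finset.sum_range_sub]
    refine Finset.sum_congr rfl fun k _ => ?_
    simp only [a, smul_smul, ← mul_pow]
    norm_num
  have hlim (e' : V →L[ℝ] ℝ) : Tendsto (fun n => e' (r n - r 0)) atTop (𝓝 (I e' - e' (r 0))) := by
    obtain ⟨M, hM⟩ := hD.exists_forall_abs_le e'
    have hgeom : Tendsto (fun n : ℕ => M * (1 / 4 : ℝ) ^ (n + 1)) atTop (𝓝 0) := by
      simpa using ((tendsto_pow_atTop_nhds_zero_of_lt_one (r := (1 / 4 : ℝ)) (by norm_num)
        (by norm_num)).comp (tendsto_add_atTop_nat 1)).const_mul M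
    rw [tendsto_iff_norm_sub_tendsto_zero]
    refine squeeze_zero (fun n => norm_nonneg _) (fun n => ?_) hgeom
    rw [map_sub, sub_sub_sub_cancel_right, Real.norm_eq_abs]
    exact hr e' M hM n
  obtain ⟨x, -, hx⟩ := exists_forall_apply_eq_of_tendsto hQ
    (fun n => hsum n ▸ subset_closure (sum_range_half_pow_smul_mem_convexHull_insert_zero a n)) hlim
  exact ⟨r 0 + x, fun e' => by rw [map_add, hx]; ring⟩

end MetricConvexCompactness

theorem stmt13 (hE : MetricConvexCompactness E)
    (μ : Measure E) [IsFiniteMeasure μ] (hreg : MetricallyRegular μ)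
    (D : Set E) (hDb : Bornology.IsVonNBounded ℝ D) (hconc : μ Dᶜ = 0) :
    ∃ r : E, IsBarycenter μ r := by
  have hD : ∀ᵐ y ∂μ, y ∈ D := hconc
  obtain rfl | hDne := D.eq_empty_or_nonempty
  · exact ⟨0, fun e' => by simp [Measure.measure_univ_eq_zero.1 (by simpa using hconc)]⟩
  choose K hK hKm hKμ using fun n : ℕ => hreg.exists_isCompact_metrizableSpace_measure_compl_lt
    (ENNReal.ofReal_pos.2 (by positivity : (0 : ℝ) < (1 / 4) ^ (n + 1))).ne'
  choose r hr using fun n => (hE _ (hK n) (hKm n)).exists_isBarycenter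
    (convex_convexHull ℝ (K n)).closure (ν := μ.restrict (K n))
    (ae_restrict_of_forall_mem (hK n).measurableSet
      fun y hy => subset_closure (subset_convexHull ℝ _ hy))
  obtain ⟨x, hx⟩ := hE.exists_forall_apply_eq_of_abs_sub_le hDb hDne (I := fun e' => ∫ y, e' y ∂μ)
    fun e' M hM n => (hr n).abs_sub_integral_le (hK n).measurableSet e'
      ((abs_nonneg _).trans (hM _ hDne.some_mem)) (hD.mono hM)
      (ENNReal.toReal_le_of_le_ofReal (by positivity) (hKμ n).le)
  refine ⟨x, fun e' => ⟨?_, hx e'⟩⟩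
  obtain ⟨M, hM⟩ := hDb.exists_forall_abs_le e'
  exact (integrable_const M).mono' e'.continuous.aestronglyMeasurable (hD.mono hM)
end

section
/- Let (Kₙ) be a sequence of compact metrizable subsets of a locally convex Hausdorff space E whose union is bounded, and let (bₙ) be a sequence of positive reals with bₙ → 0. Then the set K = (⋃ₙ bₙKₙ) ∪ {0} is compact and metrizable. -/
/-!
The set is the image of the one-point compactification of the disjoint union `Σ n, K n`
under `⟨n, x⟩ ↦ b n • x`, `∞ ↦ 0`; this map is continuous at `∞` because `⋃ n, K n` is
bounded and `b n → 0`. The one-point compactification is compact and second countable, and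
second countability passes along the continuous (hence proper) surjection onto the Hausdorff
image, which is therefore compact and metrizable.
-/

open Set Pointwise Filter Topology TopologicalSpace

instance Sigma.weaklyLocallyCompactSpace {ι : Type*} {S : ι → Type*}
    [∀ i, TopologicalSpace (S i)] [∀ i, WeaklyLocallyCompactSpace (S i)] : WeaklyLocallyCompactSpace (Σ i, S i) where
  exists_compact_mem_nhds := fun ⟨i, x⟩ => by
    obtain ⟨C, hC, hCx⟩ := exists_compact_mem_nhds x
    exact ⟨Sigma.mk i '' C, hC.image continuous_sigmaMk,
      IsOpenEmbedding.sigmaMk.isOpenMap.image_mem_nhds hCx⟩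

theorem Sigma.tendsto_fst_cocompact_cofinite {ι : Type*} {S : ι → Type*}
    [∀ i, TopologicalSpace (S i)] [∀ i, CompactSpace (S i)] :
    Tendsto Sigma.fst (cocompact (Σ i, S i)) cofinite := fun s hs => by
  refine mem_cocompact.2 ⟨Sigma.fst ⁻¹' sᶜ, ?_, fun p hp => not_not.1 hp⟩
  rw [← biUnion_of_singleton sᶜ, preimage_iUnion₂]
  exact hs.isCompact_biUnion fun i _ => range_sigmaMk i ▸ isCompact_range continuous_sigmaMk

namespace OnePoint

variable {X : Type*} [TopologicalSpace X]

instance secondCountableTopology [WeaklyLocallyCompactSpace X] [SigmaCompactSpace X] [R1Space X]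
    [SecondCountableTopology X] : SecondCountableTopology (OnePoint X) := by
  let L := CompactExhaustion.choice X
  obtain ⟨B, hBc, -, hB⟩ := exists_countable_basis X
  refine IsTopologicalBasis.secondCountableTopology
    (b := image ((↑) : X → OnePoint X) '' B ∪ range fun n => ((↑) '' closure (L n))ᶜ) ?_
    ((hBc.image _).union (countable_range _))
  refine isTopologicalBasis_of_isOpen_of_nhds ?_ ?_
  · rintro s (⟨u, hu, rfl⟩ | ⟨n, rfl⟩)
    · exact isOpen_image_coe.2 (hB.isOpen hu)
    · exact isOpen_compl_image_coe.2 ⟨isClosed_closure, (L.isCompact n).closure⟩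
  · intro z O hzO hO
    induction z using OnePoint.rec with
    | infty =>
      obtain ⟨-, hcpt⟩ := (isOpen_iff_of_mem hzO).1 hO
      obtain ⟨n, hn⟩ := L.exists_superset_of_isCompact hcpt
      refine ⟨_, Or.inr ⟨n, rfl⟩, fun ⟨x, _, hx⟩ => coe_ne_infty x hx, ?_⟩
      rintro (_ | x) hx
      · exact hzO
      · by_contra hxO
        exact hx ⟨x, subset_closure (hn hxO), rfl⟩
    | coe x =>
      obtain ⟨u, hu, hxu, huO⟩ :=
        hB.exists_subset_of_mem_open (show x ∈ (↑) ⁻¹' O from hzO)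
          (hO.preimage continuous_coe)
      exact ⟨_, Or.inl ⟨u, hu, rfl⟩, mem_image_of_mem _ hxu,
        (image_mono huO).trans (image_preimage_subset _ _)⟩

end OnePoint

theorem IsProperMap.secondCountableTopology {X Y : Type*} [TopologicalSpace X]
    [TopologicalSpace Y] [SecondCountableTopology X] {f : X → Y} (hf : IsProperMap f)
    (hsurj : Function.Surjective f) : SecondCountableTopology Y := by
  obtain ⟨B, hBc, -, hB⟩ := exists_countable_basis X
  -- `V s` is the largest set whose preimage lies in `⋃₀ s`
  let V : Set (Set X) → Set Y := fun s => (f '' (⋃₀ s)ᶜ)ᶜ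
  refine IsTopologicalBasis.secondCountableTopology (b := V '' {s | s.Finite ∧ s ⊆ B}) ?_
    ((countable_ofPred_finite_subset hBc).image _)
  refine isTopologicalBasis_of_isOpen_of_nhds ?_ ?_
  · rintro _ ⟨s, ⟨-, hsB⟩, rfl⟩
    have hs : IsOpen (⋃₀ s) := isOpen_sUnion fun t ht => hB.isOpen (hsB ht)
    exact (hf.isClosedMap _ hs.isClosed_compl).isOpen_compl
  · intro y O hyO hO
    have hW : IsOpen (f ⁻¹' O) := hO.preimage hf.continuous
    have hfiber : f ⁻¹' {y} ⊆ ⋃ v ∈ {v ∈ B | v ⊆ f ⁻¹' O}, v := by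
      rw [← sUnion_eq_biUnion, ← hB.open_eq_sUnion' hW]
      exact preimage_mono (singleton_subset_iff.2 hyO)
    obtain ⟨s, hsB, hs, hys⟩ :=
      (hf.isCompact_preimage isCompact_singleton).elim_finite_subcover_image
        (fun v hv => hB.isOpen hv.1) hfiber
    refine ⟨V s, ⟨s, ⟨hs, fun v hv => (hsB hv).1⟩, rfl⟩, ?_, ?_⟩
    · rintro ⟨x, hx, rfl⟩
      exact hx (sUnion_eq_biUnion ▸ hys rfl)
    · intro z hz
      obtain ⟨x, rfl⟩ := hsurj z
      by_contra hxO
      refine hz ⟨x, fun hx => hxO ?_, rfl⟩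
      obtain ⟨v, hv, hxv⟩ := hx
      exact (hsB hv).2 hxv

theorem Continuous.metrizableSpace_range {X Y : Type*} [TopologicalSpace X] [TopologicalSpace Y]
    [CompactSpace X] [SecondCountableTopology X] [T2Space Y] {f : X → Y} (hf : Continuous f) :
    MetrizableSpace (range f) :=
  have : CompactSpace (range f) := isCompact_iff_compactSpace.1 (isCompact_range hf)
  have := (hf.rangeFactorization.isProperMap).secondCountableTopology rangeFactorization_surjective
  inferInstance

theorem tendsto_sigma_smul_cocompact_nhds_zero {𝕜 E : Type*} [NormedDivisionRing 𝕜]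
    [AddCommGroup E] [Module 𝕜 E] [TopologicalSpace E] {K : ℕ → Set E}
    [∀ n, CompactSpace (K n)] (hbd : Bornology.IsVonNBounded 𝕜 (⋃ n, K n)) {b : ℕ → 𝕜}
    (hb : Tendsto b atTop (𝓝 0)) :
    Tendsto (fun p : Σ n, K n => b p.1 • (p.2 : E)) (cocompact _) (𝓝 0) :=
  (hbd.tendsto_smallSets_nhds.comp <| hb.comp <|
    Nat.cofinite_eq_atTop ▸ Sigma.tendsto_fst_cocompact_cofinite).of_smallSets <|
    .of_forall fun p => smul_mem_smul_set (mem_iUnion_of_mem p.1 p.2.2)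

theorem stmt14_general {E : Type*} [AddCommGroup E] [Module ℝ E] [TopologicalSpace E]
    [ContinuousSMul ℝ E] [T2Space E]
    (K : ℕ → Set E) (hK : ∀ n, IsCompact (K n))
    (hKm : ∀ n, TopologicalSpace.MetrizableSpace (K n))
    (hbd : Bornology.IsVonNBounded ℝ (⋃ n, K n))
    (b : ℕ → ℝ) (hb0 : Tendsto b atTop (𝓝 0)) :
    IsCompact ((⋃ n, b n • K n) ∪ {0}) ∧
    TopologicalSpace.MetrizableSpace (((⋃ n, b n • K n) ∪ {0} : Set E)) := by
  have (n : ℕ) : CompactSpace (K n) := isCompact_iff_compactSpace.1 (hK n)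
  have (n : ℕ) : SecondCountableTopology (K n) := by have := hKm n; infer_instance
  let f : C(OnePoint (Σ n, K n), E) := OnePoint.continuousMapMk
    ⟨fun p => b p.1 • (p.2 : E), continuous_sigma fun n => by fun_prop⟩ 0
    (coclosedCompact_eq_cocompact (X := Σ n, K n) ▸
      tendsto_sigma_smul_cocompact_nhds_zero hbd hb0)
  have hrange : range f = (⋃ n, b n • K n) ∪ {0} := by
    rw [union_singleton,
      iUnion_congr fun n => (image_smul (a := b n)).symm.trans (image_eq_range _ _),
      ← range_sigma_eq_iUnion_range (fun p : Σ n, K n => b p.1 • (p.2 : E))]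
    exact Option.range_elim _ _
  rw [← hrange]
  exact ⟨isCompact_range f.continuous, f.continuous.metrizableSpace_range⟩

theorem stmt14 {E : Type*} [AddCommGroup E] [Module ℝ E] [TopologicalSpace E]
    [IsTopologicalAddGroup E] [ContinuousSMul ℝ E] [LocallyConvexSpace ℝ E] [T2Space E]
    (K : ℕ → Set E) (hK : ∀ n, IsCompact (K n))
    (hKm : ∀ n, TopologicalSpace.MetrizableSpace (K n))
    (hbd : Bornology.IsVonNBounded ℝ (⋃ n, K n))
    (b : ℕ → ℝ) (hb : ∀ n, 0 < b n) (hb0 : Tendsto b atTop (𝓝 0)) :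
    IsCompact ((⋃ n, b n • K n) ∪ {0}) ∧
    TopologicalSpace.MetrizableSpace (((⋃ n, b n • K n) ∪ {0} : Set E)) :=
  stmt14_general K hK hKm hbd b hb0
end

section
/- Let μ be a finite Borel measure on a locally convex Hausdorff space E concentrated on disjoint compact sets Kₙ ⊆ E, let bₙ > 0 with Σₙ μ(Kₙ)/bₙ < ∞, and define μ̃(A) = Σₙ μ(bₙ⁻¹A ∩ Kₙ)/bₙ. Then μ̃ is a finite Borel measure, and for every continuous linear functional e' on E, ∫ ⟨e', x⟩ dμ̃(x) = ∫ ⟨e', x⟩ dμ(x). In particular any barycenter of (normalized) μ̃ yields the barycenter of μ. -/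
/-!
Each piece `bₙ⁻¹ • (bₙ • ·)_* μ|_{Kₙ}` integrates every `1`-homogeneous function `f` exactly as
`μ|_{Kₙ}` does: the dilation multiplies `f` by `bₙ` and the weight divides it back out. The same
holds for `‖f‖`, so integrability transfers piece by piece, and summing over the disjoint pieces
that carry `μ` gives back `∫ f ∂μ`. Total mass is `∑ μ(Kₙ)/bₙ`, finite by assumption.
-/

open MeasureTheory Set
open scoped ENNReal

namespace MeasureTheory

variable {α ι : Type*} {mα : MeasurableSpace α} {μ : Measure α}

theorem Measure.sum_restrict_of_measure_compl_iUnion_eq_zero [Countable ι] {s : ι → Set α}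
    (hd : Pairwise (Function.onFun Disjoint s)) (hs : ∀ i, MeasurableSet (s i))
    (h : μ (⋃ i, s i)ᶜ = 0) :
    Measure.sum (fun i => μ.restrict (s i)) = μ := by
  rw [← Measure.restrict_iUnion hd hs]
  exact Measure.restrict_eq_self_of_ae_mem (mem_ae_iff.2 h)

variable {G : Type*} [NormedAddCommGroup G] [NormedSpace ℝ G]

theorem integral_sum_measure_congr [Countable ι] {ν ρ : ι → Measure α} {f : α → G}
    (hint : ∀ i, Integrable f (ν i) ↔ Integrable f (ρ i))
    (hnorm : ∀ i, ∫ x, ‖f x‖ ∂ν i = ∫ x, ‖f x‖ ∂ρ i)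
    (h : ∀ i, ∫ x, f x ∂ν i = ∫ x, f x ∂ρ i) :
    ∫ x, f x ∂Measure.sum ν = ∫ x, f x ∂Measure.sum ρ := by
  have hsum : Integrable f (Measure.sum ν) ↔ Integrable f (Measure.sum ρ) := by
    simp only [integrable_sum_measure_iff, hint, hnorm]
  by_cases hf : Integrable f (Measure.sum ρ)
  · rw [integral_sum_measure hf, integral_sum_measure (hsum.2 hf)]
    simp only [h]
  · rw [integral_undef hf, integral_undef (mt hsum.1 hf)]

end MeasureTheory

section Rescale

variable {E G : Type*} [SMul ℝ E] [MeasurableSpace E] [MeasurableConstSMul ℝ E]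
  [NormedAddCommGroup G] [NormedSpace ℝ G] {c : ℝ} {ν : Measure E} {f : E → G}

/-- `rescale bₙ (μ.restrict Kₙ)` is the summand `A ↦ μ(bₙ⁻¹A ∩ Kₙ)/bₙ` of `μ̃`. -/
noncomputable def rescale (c : ℝ) (ν : Measure E) : Measure E :=
  (ENNReal.ofReal c)⁻¹ • ν.map (c • ·)

theorem rescale_apply_univ : rescale c ν univ = ν univ / ENNReal.ofReal c := by
  rw [rescale, Measure.smul_apply, Measure.map_apply (measurable_const_smul c) MeasurableSet.univ,
    preimage_univ, smul_eq_mul, div_eq_mul_inv, mul_comm]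

theorem integrable_rescale_iff (hc : 0 < c) (hf : StronglyMeasurable f)
    (hhom : ∀ x, f (c • x) = c • f x) :
    Integrable f (rescale c ν) ↔ Integrable f ν := by
  rw [rescale, integrable_smul_measure (by simp) (by simpa using hc),
    integrable_map_measure hf.aestronglyMeasurable (measurable_const_smul c).aemeasurable,
    show f ∘ (c • ·) = c • f from funext hhom, integrable_smul_iff hc.ne']

theorem integral_rescale (hc : 0 < c) (hf : StronglyMeasurable f)
    (hhom : ∀ x, f (c • x) = c • f x) :
    ∫ x, f x ∂rescale c ν = ∫ x, f x ∂ν := by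
  rw [rescale, integral_smul_measure,
    integral_map (measurable_const_smul c).aemeasurable hf.aestronglyMeasurable]
  simp only [hhom, integral_smul, smul_smul, ENNReal.toReal_inv, ENNReal.toReal_ofReal hc.le,
    inv_mul_cancel₀ hc.ne', one_smul]

theorem integral_sum_rescale_restrict {ι : Type*} [Countable ι] {b : ι → ℝ} {K : ι → Set E}
    (hb : ∀ n, 0 < b n) (hf : StronglyMeasurable f) (hhom : ∀ c : ℝ, 0 < c → ∀ x, f (c • x) = c • f x) :
    ∫ x, f x ∂Measure.sum (fun n => rescale (b n) (ν.restrict (K n))) =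
      ∫ x, f x ∂Measure.sum (fun n => ν.restrict (K n)) := by
  have hnorm : ∀ c : ℝ, 0 < c → ∀ x, ‖f (c • x)‖ = c • ‖f x‖ := fun c hc x => by
    rw [hhom c hc, norm_smul, Real.norm_of_nonneg hc.le, smul_eq_mul]
  exact integral_sum_measure_congr
    (fun n => integrable_rescale_iff (hb n) hf (hhom _ (hb n)))
    (fun n => integral_rescale (hb n) hf.norm (hnorm _ (hb n)))
    (fun n => integral_rescale (hb n) hf (hhom _ (hb n)))

end Rescale

theorem stmt15_general {E : Type*} [AddCommGroup E] [Module ℝ E] [TopologicalSpace E]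
    [ContinuousSMul ℝ E] [T2Space E]
    [MeasurableSpace E] [BorelSpace E]
    (μ : Measure E)
    (K : ℕ → Set E) (hK : ∀ n, IsCompact (K n))
    (hdisj : ∀ m n, m ≠ n → Disjoint (K m) (K n))
    (hconc : μ (⋃ n, K n)ᶜ = 0)
    (b : ℕ → ℝ) (hb : ∀ n, 0 < b n)
    (hsum : (∑' n, μ (K n) / ENNReal.ofReal (b n)) < ⊤) :
    let μt : Measure E := Measure.sum fun n =>
      (ENNReal.ofReal (b n))⁻¹ • Measure.map (fun x => b n • x) (μ.restrict (K n))
    IsFiniteMeasure μt ∧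
    (∀ e' : E →L[ℝ] ℝ, ∫ x, e' x ∂μt = ∫ x, e' x ∂μ) ∧
    (∀ r : E, (∀ e' : E →L[ℝ] ℝ, e' r = ∫ x, e' x ∂μt) →
      ∀ e' : E →L[ℝ] ℝ, e' r = ∫ x, e' x ∂μ) := by
  intro μt
  have hμt : μt = Measure.sum fun n => rescale (b n) (μ.restrict (K n)) := rfl
  have hμ : Measure.sum (fun n => μ.restrict (K n)) = μ :=
    Measure.sum_restrict_of_measure_compl_iUnion_eq_zero hdisj
      (fun n => (hK n).isClosed.measurableSet) hconc
  have hint : ∀ e' : E →L[ℝ] ℝ, ∫ x, e' x ∂μt = ∫ x, e' x ∂μ := fun e' => by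
    rw [hμt, integral_sum_rescale_restrict hb e'.continuous.stronglyMeasurable
      (fun c _ => e'.map_smul c), hμ]
  refine ⟨⟨?_⟩, hint, fun r hr e' => (hr e').trans (hint e')⟩
  rw [hμt, Measure.sum_apply _ MeasurableSet.univ]
  simpa only [rescale_apply_univ, Measure.restrict_apply_univ] using hsum

theorem stmt15 {E : Type*} [AddCommGroup E] [Module ℝ E] [TopologicalSpace E]
    [IsTopologicalAddGroup E] [ContinuousSMul ℝ E] [LocallyConvexSpace ℝ E] [T2Space E]
    [MeasurableSpace E] [BorelSpace E]
    (μ : Measure E) [IsFiniteMeasure μ]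
    (K : ℕ → Set E) (hK : ∀ n, IsCompact (K n))
    (hdisj : ∀ m n, m ≠ n → Disjoint (K m) (K n))
    (hconc : μ (⋃ n, K n)ᶜ = 0)
    (b : ℕ → ℝ) (hb : ∀ n, 0 < b n)
    (hsum : (∑' n, μ (K n) / ENNReal.ofReal (b n)) < ⊤) :
    let μt : Measure E := Measure.sum fun n =>
      (ENNReal.ofReal (b n))⁻¹ • Measure.map (fun x => b n • x) (μ.restrict (K n))
    IsFiniteMeasure μt ∧
    (∀ e' : E →L[ℝ] ℝ, ∫ x, e' x ∂μt = ∫ x, e' x ∂μ) ∧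
    (∀ r : E, (∀ e' : E →L[ℝ] ℝ, e' r = ∫ x, e' x ∂μt) →
      ∀ e' : E →L[ℝ] ℝ, e' r = ∫ x, e' x ∂μ) :=
  stmt15_general μ K hK hdisj hconc b hb hsum
end
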